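/- arXiv:1702.02998 — 12 statements merged into one kernel-verified Lean document; each statement's English description precedes it below -/
import Mathlib

section
/- The sylvester monoid satisfies the identity xyxy = yxxy; that is, for all words x, y over the positive integers, the words xyxy and yxxy are congruent under the sylvester congruence. -/
/-- Binary trees labelled by elements of `α`. -/
inductive BT (α : Type) : Type
  | leaf : BT α
  | node : BT α → α → BT α → BT α
  deriving DecidableEq

namespace BT

variable {α β : Type}

/-- Map a function over the labels of a tree. -/
def map (f : α → β) : BT α → BT β
  | leaf => leaf
  | node l a r => node (map f l) (f a) (map f r)

/-- The shape of a labelled tree: its underlying unlabelled tree. -/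
def shape : BT α → BT Unit := map (fun _ => ())

/-- The content of a tree: the multiset of its labels. -/
def content : BT α → Multiset α
  | leaf => 0
  | node l a r => a ::ₘ (content l + content r)

/-- Infix (in-order) reading of a labelled tree. -/
def infixRead : BT α → List α
  | leaf => []
  | node l a r => infixRead l ++ a :: infixRead r

/-- Left-to-right postfix (post-order) reading of a labelled tree. -/
def postfixRead : BT α → List α
  | leaf => []
  | node l a r => postfixRead l ++ postfixRead r ++ [a]

/-- Right strict binary search tree: each label is ≥ everything in its left
subtree and < everything in its right subtree. -/
def IsRBST : BT ℕ+ → Prop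
  | leaf => True
  | node l a r =>
      (∀ x ∈ content l, x ≤ a) ∧ (∀ x ∈ content r, a < x) ∧ IsRBST l ∧ IsRBST r

/-- Left strict binary search tree: each label is > everything in its left
subtree and ≤ everything in its right subtree. -/
def IsLBST : BT ℕ+ → Prop
  | leaf => True
  | node l a r =>
      (∀ x ∈ content l, x < a) ∧ (∀ x ∈ content r, a ≤ x) ∧ IsLBST l ∧ IsLBST r

/-- Right strict leaf insertion: `a ≤` root label goes left, else right. -/
def rIns (a : ℕ+) : BT ℕ+ → BT ℕ+
  | leaf => node leaf a leaf
  | node l x r => if a ≤ x then node (rIns a l) x r else node l x (rIns a r)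

/-- Left strict leaf insertion: `a ≥` root label goes right, else left. -/
def lIns (a : ℕ+) : BT ℕ+ → BT ℕ+
  | leaf => node leaf a leaf
  | node l x r => if x ≤ a then node l x (lIns a r) else node (lIns a l) x r

end BT

open BT

/-- The sylvester P-symbol: insert the letters of `u` from right to left via
right strict leaf insertion. -/
def Psylv (u : List ℕ+) : BT ℕ+ := u.foldr rIns .leaf

/-- Left strict insertion of a word, processing letters left to right. -/
def Pltree (u : List ℕ+) : BT ℕ+ := u.foldl (fun t a => lIns a t) .leaf

/-- Auxiliary fuelled construction of the decreasing tree of a word: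
the maximum letter is the root, and the subtrees are built recursively from
the factors to its left and right. -/
def decAux : ℕ → List ℕ+ → BT ℕ+
  | 0, _ => .leaf
  | _ + 1, [] => .leaf
  | n + 1, (a :: l) =>
      let m := (a :: l).foldr max a
      let i := (a :: l).idxOf m
      .node (decAux n ((a :: l).take i)) m (decAux n ((a :: l).drop (i + 1)))

/-- The decreasing tree of a word (with distinct letters). -/
def decTree (u : List ℕ+) : BT ℕ+ := decAux u.length u

/-- Auxiliary fuelled construction of the increasing tree of a word. -/
def incAux : ℕ → List ℕ+ → BT ℕ+
  | 0, _ => .leaf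
  | _ + 1, [] => .leaf
  | n + 1, (a :: l) =>
      let m := (a :: l).foldr min a
      let i := (a :: l).idxOf m
      .node (incAux n ((a :: l).take i)) m (incAux n ((a :: l).drop (i + 1)))

/-- The increasing tree of a word (with distinct letters). -/
def incTree (u : List ℕ+) : BT ℕ+ := incAux u.length u

/-- The standardization of a word: the `j`-th letter `a` is relabelled by the
number of letters smaller than `a` plus the number of occurrences of `a` up to
and including position `j`. -/
def stdWord (u : List ℕ+) : List ℕ+ :=
  u.mapIdx (fun j a =>
    (u.countP (fun b => decide (b < a)) +
       (u.take (j + 1)).countP (fun b => decide (b = a))).toPNat')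

/-- The inverse of a standard word, viewed as a permutation in one-line
notation: the `j`-th letter is the position of `j` in `w`. -/
def invWord (w : List ℕ+) : List ℕ+ :=
  (List.range w.length).map (fun j => (w.idxOf (j + 1).toPNat' + 1).toPNat')

/-- A standard word: a permutation of `1, …, k` in one-line notation. -/
def IsStandard (w : List ℕ+) : Prop :=
  w.Perm ((List.range w.length).map (fun j => (j + 1).toPNat'))

/-- The quasi-Kashiwara raising operator `ė i` is defined on `u`: `u` has no
letter `i+1` to the left of a letter `i`, and `u` contains a letter `i+1`. -/
def qeDef (i : ℕ+) (u : List ℕ+) : Prop :=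
  ¬ List.Sublist [i + 1, i] u ∧ (i + 1) ∈ u

/-- The quasi-Kashiwara lowering operator `ḟ i` is defined on `u`: `u` has no
letter `i+1` to the left of a letter `i`, and `u` contains a letter `i`. -/
def qfDef (i : ℕ+) (u : List ℕ+) : Prop :=
  ¬ List.Sublist [i + 1, i] u ∧ i ∈ u

/-- The action of `ė i`: replace the leftmost letter `i+1` by `i`. -/
def qe (i : ℕ+) (u : List ℕ+) : List ℕ+ := u.set (u.idxOf (i + 1)) i

/-- The action of `ḟ i`: replace the rightmost letter `i` by `i+1`. -/
def qf (i : ℕ+) (u : List ℕ+) : List ℕ+ :=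
  (u.reverse.set (u.reverse.idxOf i) (i + 1)).reverse

/-- The defining relations of the sylvester monoid:
`(c a v b, a c v b)` for letters `a ≤ b < c` and words `v`. -/
def sylvRel (u v : FreeMonoid ℕ+) : Prop :=
  ∃ (a b c : ℕ+) (w : FreeMonoid ℕ+), a ≤ b ∧ b < c ∧
    u = FreeMonoid.ofList [c, a] * w * FreeMonoid.of b ∧
    v = FreeMonoid.ofList [a, c] * w * FreeMonoid.of b

/-- The sylvester congruence: the congruence generated by `sylvRel`. -/
def sylvCon : Con (FreeMonoid ℕ+) := conGen sylvRel

/-!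
Two letters `a < c` commute in front of any word containing `a`: writing that word as `w a t`,
the defining relation with `b = a` gives `c a w a ≡ a c w a`. Hence any two factors whose letters
all occur in the following suffix commute, and in `x y x y` the prefix `x y` stands in front of
the suffix `x y`.
-/

open FreeMonoid

lemma FreeMonoid.exists_eq_mul_of_mem {α : Type*} {a : α} {s : FreeMonoid α} (h : a ∈ s) :
    ∃ w t : FreeMonoid α, s = w * of a * t := by
  obtain ⟨w, t, hs⟩ : ∃ w t, toList s = w ++ a :: t := List.append_of_mem h
  exact ⟨ofList w, ofList t, toList.injective (by simp [hs])⟩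

lemma sylvCon_swap_of_lt_of_mem {a c : ℕ+} {s : FreeMonoid ℕ+} (hac : a < c) (ha : a ∈ s) :
    sylvCon (of c * of a * s) (of a * of c * s) := by
  obtain ⟨w, t, rfl⟩ := exists_eq_mul_of_mem ha
  have hrel : sylvRel (of c * of a * w * of a) (of a * of c * w * of a) :=
    ⟨a, a, c, w, le_rfl, hac, rfl, rfl⟩
  simpa only [mul_assoc] using sylvCon.mul (ConGen.Rel.of _ _ hrel) (sylvCon.refl t)

lemma sylvCon_swap_of_mem {a c : ℕ+} {s : FreeMonoid ℕ+} (ha : a ∈ s) (hc : c ∈ s) :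
    sylvCon (of a * of c * s) (of c * of a * s) := by
  rcases lt_trichotomy a c with hac | rfl | hca
  · exact (sylvCon_swap_of_lt_of_mem hac ha).symm
  · exact sylvCon.refl _
  · exact sylvCon_swap_of_lt_of_mem hca hc

lemma sylvCon_of_mul_comm_of_forall_mem {a : ℕ+} {v s : FreeMonoid ℕ+} (ha : a ∈ s)
    (hv : ∀ c ∈ v, c ∈ s) : sylvCon (of a * v * s) (v * of a * s) := by
  induction v using FreeMonoid.inductionOn' with
  | one => simpa using sylvCon.refl (of a * s)
  | of_mul b v ih =>
    have hv' : ∀ c ∈ v, c ∈ s := fun c hc => hv c (mem_mul.2 (Or.inr hc))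
    have hb : b ∈ s := hv b (mem_mul.2 (Or.inl mem_of_self))
    have hswap := sylvCon_swap_of_mem (s := v * s) (mem_mul.2 (Or.inr ha)) (mem_mul.2 (Or.inr hb))
    have htail := sylvCon.mul (sylvCon.refl (of b)) (ih hv')
    simp only [mul_assoc] at hswap htail ⊢
    exact hswap.trans htail

lemma sylvCon_mul_comm_of_forall_mem {u v s : FreeMonoid ℕ+} (hu : ∀ c ∈ u, c ∈ s)
    (hv : ∀ c ∈ v, c ∈ s) : sylvCon (u * v * s) (v * u * s) := by
  induction u using FreeMonoid.inductionOn' with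
  | one => simpa using sylvCon.refl (v * s)
  | of_mul a u ih =>
    have hu' : ∀ c ∈ u, c ∈ s := fun c hc => hu c (mem_mul.2 (Or.inr hc))
    have ha : a ∈ s := hu a (mem_mul.2 (Or.inl mem_of_self))
    have htail := sylvCon.mul (sylvCon.refl (of a)) (ih hu')
    have hmove := sylvCon_of_mul_comm_of_forall_mem (s := u * s) (mem_mul.2 (Or.inr ha))
      (fun c hc => mem_mul.2 (Or.inr (hv c hc)))
    simp only [mul_assoc] at htail hmove ⊢
    exact htail.trans hmove

/-- The sylvester monoid satisfies the identity `xyxy = yxxy`. -/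
theorem sylv_identity (x y : FreeMonoid ℕ+) :
    sylvCon (x * y * x * y) (y * x * x * y) := by
  have h := sylvCon_mul_comm_of_forall_mem (s := x * y)
    (fun c hc => mem_mul.2 (Or.inl hc)) (fun c hc => mem_mul.2 (Or.inr hc))
  simpa only [mul_assoc] using h
end

section
/- The Baxter monoid satisfies the identity xyxyxy = xyyxxy; that is, for all words x, y over the positive integers, the words xyxyxy and xyyxxy are congruent under the Baxter congruence. -/
open BT

/-- The defining relations of the Baxter monoid. -/
def baxtRel (x y : FreeMonoid ℕ+) : Prop :=
  (∃ (a b c d : ℕ+) (u v : FreeMonoid ℕ+), a ≤ b ∧ b < c ∧ c ≤ d ∧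
      x = FreeMonoid.of c * u * FreeMonoid.ofList [d, a] * v * FreeMonoid.of b ∧
      y = FreeMonoid.of c * u * FreeMonoid.ofList [a, d] * v * FreeMonoid.of b) ∨
  (∃ (a b c d : ℕ+) (u v : FreeMonoid ℕ+), a < b ∧ b ≤ c ∧ c < d ∧
      x = FreeMonoid.of b * u * FreeMonoid.ofList [d, a] * v * FreeMonoid.of c ∧
      y = FreeMonoid.of b * u * FreeMonoid.ofList [a, d] * v * FreeMonoid.of c)

/-- The Baxter congruence: the congruence generated by `baxtRel`. -/
def baxtCon : Con (FreeMonoid ℕ+) := conGen baxtRel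

/-!
If `a < d`, then `d u d a v a ≡ d u a d v a` is an instance of the first Baxter relation
(with `b = a` and `c = d`). Hence, inside a context `w₁ _ w₂` in which every letter involved
occurs both in `w₁` and in `w₂`, adjacent letters commute, and therefore so do words. Since
`xyxyxy = (xy) x y (xy)` and `xyyxxy = (xy) y x (xy)`, the identity follows.
-/

open FreeMonoid

namespace FreeMonoid

theorem exists_eq_mul_of_mem_s1 {α : Type*} {a : α} {w : FreeMonoid α} (h : a ∈ w) :
    ∃ u v : FreeMonoid α, w = u * of a * v := by
  obtain ⟨u, v, huv⟩ := List.append_of_mem (show a ∈ w.toList from h)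
  exact ⟨ofList u, ofList v, by simpa [mul_assoc] using congrArg ofList huv⟩

end FreeMonoid

theorem baxtCon_swap_of_lt {a d : ℕ+} (had : a < d) {w₁ w₂ : FreeMonoid ℕ+}
    (hd : d ∈ w₁) (ha : a ∈ w₂) :
    baxtCon (w₁ * of d * of a * w₂) (w₁ * of a * of d * w₂) := by
  obtain ⟨u₁, u₂, rfl⟩ := exists_eq_mul_of_mem_s1 hd
  obtain ⟨v₁, v₂, rfl⟩ := exists_eq_mul_of_mem_s1 ha
  have hrel : baxtCon (of d * u₂ * ofList [d, a] * v₁ * of a)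
      (of d * u₂ * ofList [a, d] * v₁ * of a) :=
    ConGen.Rel.of _ _ (Or.inl ⟨a, a, d, d, u₂, v₁, le_rfl, had, le_rfl, rfl, rfl⟩)
  have h := (baxtCon.refl u₁).mul hrel |>.mul (baxtCon.refl v₂)
  simp only [ofList_cons, ofList_nil, mul_one, mul_assoc] at h ⊢
  exact h

section Commute

variable {A : Set ℕ+}

theorem baxtCon_swap_of_of {p q : ℕ+} (hp : p ∈ A) (hq : q ∈ A) {w₁ w₂ : FreeMonoid ℕ+}
    (hw : ∀ a ∈ A, a ∈ w₁ ∧ a ∈ w₂) :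
    baxtCon (w₁ * of p * of q * w₂) (w₁ * of q * of p * w₂) := by
  rcases lt_trichotomy p q with h | rfl | h
  · exact (baxtCon_swap_of_lt h (hw q hq).1 (hw p hp).2).symm
  · exact baxtCon.refl _
  · exact baxtCon_swap_of_lt h (hw p hp).1 (hw q hq).2

theorem baxtCon_swap_of_forall_of {t : FreeMonoid ℕ+}
    (ht : ∀ p ∈ A, ∀ w₁ w₂ : FreeMonoid ℕ+, (∀ a ∈ A, a ∈ w₁ ∧ a ∈ w₂) →
      baxtCon (w₁ * of p * t * w₂) (w₁ * t * of p * w₂))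
    {s : FreeMonoid ℕ+} (hs : ∀ a ∈ s, a ∈ A) {w₁ w₂ : FreeMonoid ℕ+}
    (hw : ∀ a ∈ A, a ∈ w₁ ∧ a ∈ w₂) :
    baxtCon (w₁ * s * t * w₂) (w₁ * t * s * w₂) := by
  induction s using FreeMonoid.inductionOn generalizing w₁ w₂ with
  | one => simpa only [mul_one] using baxtCon.refl _
  | of p => exact ht p (hs p mem_of_self) w₁ w₂ hw
  | mul s₁ s₂ ih₁ ih₂ =>
    have hs₁ : ∀ a ∈ s₁, a ∈ A := fun a ha => hs a (mem_mul.2 (.inl ha))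
    have hs₂ : ∀ a ∈ s₂, a ∈ A := fun a ha => hs a (mem_mul.2 (.inr ha))
    have h₂ := ih₂ hs₂ (w₁ := w₁ * s₁) (w₂ := w₂)
      fun a ha => ⟨mem_mul.2 (.inl (hw a ha).1), (hw a ha).2⟩
    have h₁ := ih₁ hs₁ (w₁ := w₁) (w₂ := s₂ * w₂)
      fun a ha => ⟨(hw a ha).1, mem_mul.2 (.inr (hw a ha).2)⟩
    simp only [mul_assoc] at h₁ h₂ ⊢
    exact h₂.trans h₁

theorem baxtCon_swap {s t : FreeMonoid ℕ+} (hs : ∀ a ∈ s, a ∈ A) (ht : ∀ a ∈ t, a ∈ A)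
    {w₁ w₂ : FreeMonoid ℕ+} (hw : ∀ a ∈ A, a ∈ w₁ ∧ a ∈ w₂) :
    baxtCon (w₁ * s * t * w₂) (w₁ * t * s * w₂) := by
  -- first with `t` a letter, then, by symmetry of `baxtCon`, with `t` a word
  refine baxtCon_swap_of_forall_of (fun p hp w₁ w₂ hw => ?_) hs hw
  exact (baxtCon_swap_of_forall_of (fun q hq w₁ w₂ hw => baxtCon_swap_of_of hq hp hw) ht hw).symm

end Commute

/-- The Baxter monoid satisfies the identity `xyxyxy = xyyxxy`. -/
theorem baxt_identity (x y : FreeMonoid ℕ+) :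
    baxtCon (x * y * x * y * x * y) (x * y * y * x * x * y) := by
  have h := baxtCon_swap (A := {a | a ∈ x * y}) (s := x) (t := y) (w₁ := x * y) (w₂ := x * y)
    (fun a ha => mem_mul.2 (.inl ha)) (fun a ha => mem_mul.2 (.inr ha)) fun _ ha => ⟨ha, ha⟩
  simpa only [mul_assoc] using h
end

section
/- Two right strict binary search trees having the same shape (underlying unlabelled binary tree) and the same content (multiset of labels) are identical. -/
open BT

/-! The in-order reading of a binary search tree is sorted, and a sorted list is determined by
its multiset of entries; a tree, in turn, is determined by its shape and its in-order reading,
since the shape fixes how the reading splits into root and subtrees. -/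

namespace BT

variable {α β : Type}

theorem infixRead_map (f : α → β) (t : BT α) : (t.map f).infixRead = t.infixRead.map f := by
  induction t with
  | leaf => rfl
  | node l a r ihl ihr => simp [map, infixRead, ihl, ihr]

theorem length_infixRead_shape (t : BT α) : t.shape.infixRead.length = t.infixRead.length := by
  rw [shape, infixRead_map, List.length_map]

theorem content_eq_coe_infixRead (t : BT α) : t.content = (t.infixRead : Multiset α) := by
  induction t with
  | leaf => rfl
  | node l a r ihl ihr =>
    simp only [content, infixRead, ihl, ihr, ← Multiset.cons_coe, ← Multiset.coe_add,
      Multiset.add_cons]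

theorem mem_content_iff_mem_infixRead {x : α} {t : BT α} : x ∈ t.content ↔ x ∈ t.infixRead := by
  rw [content_eq_coe_infixRead, Multiset.mem_coe]

theorem eq_of_shape_eq_of_infixRead_eq {t t' : BT α} (hshape : t.shape = t'.shape)
    (hread : t.infixRead = t'.infixRead) : t = t' := by
  induction t generalizing t' with
  | leaf => cases t' <;> simp_all [shape, map]
  | node l a r ihl ihr =>
    cases t' with
    | leaf => simp [shape, map] at hshape
    | node l' a' r' =>
      change node l.shape () r.shape = node l'.shape () r'.shape at hshape
      obtain ⟨hl, -, hr⟩ := node.inj hshape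
      rw [infixRead, infixRead] at hread
      have hlen : l.infixRead.length = l'.infixRead.length := by
        rw [← length_infixRead_shape l, ← length_infixRead_shape l', hl]
      obtain ⟨hreadl, hcons⟩ := List.append_inj hread hlen
      obtain ⟨rfl, hreadr⟩ := List.cons_eq_cons.mp hcons
      rw [ihl hl hreadl, ihr hr hreadr]

theorem IsRBST.sortedLE_infixRead {t : BT ℕ+} (h : IsRBST t) : t.infixRead.SortedLE := by
  induction t with
  | leaf => exact List.Pairwise.nil.sortedLE
  | node l a r ihl ihr =>
    obtain ⟨hle, hlt, hl, hr⟩ := h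
    simp only [mem_content_iff_mem_infixRead] at hle hlt
    rw [infixRead, List.sortedLE_iff_pairwise, List.pairwise_append, List.pairwise_cons]
    refine ⟨(ihl hl).pairwise, ⟨fun y hy => (hlt y hy).le, (ihr hr).pairwise⟩, ?_⟩
    intro x hx y hy
    rcases List.mem_cons.mp hy with rfl | hy
    · exact hle x hx
    · exact (hle x hx).trans (hlt y hy).le

end BT

/-- Two right strict binary search trees with the same shape and the same
content are identical. -/
theorem rbst_eq_of_shape_eq_content_eq (T T' : BT ℕ+)
    (hT : IsRBST T) (hT' : IsRBST T')
    (hshape : shape T = shape T') (hcontent : content T = content T') :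
    T = T' := by
  refine eq_of_shape_eq_of_infixRead_eq hshape ?_
  rw [content_eq_coe_infixRead, content_eq_coe_infixRead, Multiset.coe_eq_coe] at hcontent
  exact hcontent.eq_of_sortedLE hT.sortedLE_infixRead hT'.sortedLE_infixRead
end

section
/- For any word u over the positive integers and any i, if the quasi-Kashiwara raising operator ė_i is defined on u then std(ė_i(u)) = std(u), and if the quasi-Kashiwara lowering operator ḟ_i is defined on u then std(ḟ_i(u)) = std(u). -/
open BT

/-!
The letter of `std u` at position `j` counts the letters up to `j` that are `≤ u_j` and the
letters after `j` that are `< u_j`. Replacing the letter `x` at one position by `y` therefore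
leaves `std u` unchanged as long as every letter to its left compares (`≤`) the same way with
`x` and `y`, and every letter to its right compares (`<`) the same way. For `x = i + 1`, `y = i`
this holds exactly when no `i + 1` lies to the left and no `i` to the right of that position,
which for the leftmost `i + 1` (for `ė_i`) or the rightmost `i` (for `ḟ_i`) is the condition
that `u` has no `i + 1` to the left of an `i`.
-/

namespace List

variable {α : Type*}

theorem countP_lt_add_countP_eq [LinearOrder α] (l : List α) (a : α) :
    l.countP (· < a) + l.countP (· = a) = l.countP (· ≤ a) := by
  induction l with
  | nil => rfl
  | cons b l ih =>
    simp only [countP_cons, decide_eq_true_eq, le_iff_lt_or_eq (a := b)]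
    rcases lt_trichotomy b a with h | rfl | h
    · simp [h, h.ne]; omega
    · simp; omega
    · simp [h.not_gt, h.ne']; omega

theorem countP_lt_add_countP_take_eq [LinearOrder α] (l : List α) (n : ℕ) (a : α) :
    l.countP (· < a) + (l.take n).countP (· = a) =
      (l.take n).countP (· ≤ a) + (l.drop n).countP (· < a) := by
  have hsplit := congrArg (countP (· < a)) (take_append_drop n l)
  rw [countP_append] at hsplit
  rw [← hsplit, ← countP_lt_add_countP_eq]
  omega

theorem exists_eq_append_cons_notMem_right {l : List α} {a : α} (h : a ∈ l) :
    ∃ L R, l = L ++ a :: R ∧ a ∉ R := by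
  obtain ⟨R', L', hl, hR'⟩ := eq_append_cons_of_mem (mem_reverse.2 h)
  exact ⟨L'.reverse, R'.reverse, by simpa using congrArg reverse hl, by simpa using hR'⟩

theorem pair_sublist_append_cons_of_mem_left {L R : List α} {a b : α} (ha : a ∈ L) :
    [a, b] <+ L ++ b :: R :=
  (singleton_sublist.2 ha).append ((nil_sublist R).cons_cons b)

theorem pair_sublist_append_cons_of_mem_right {L R : List α} {a b : α} (hb : b ∈ R) :
    [a, b] <+ L ++ a :: R :=
  ((singleton_sublist.2 hb).cons_cons a).trans (sublist_append_right L _)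

variable [DecidableEq α]

theorem set_idxOf_append_cons {L R : List α} {a : α} (h : a ∉ L) (b : α) :
    (L ++ a :: R).set ((L ++ a :: R).idxOf a) b = L ++ b :: R := by
  rw [idxOf_append_of_notMem h, idxOf_cons_self, add_zero, set_append_right _ _ le_rfl]
  simp

theorem reverse_set_idxOf_reverse_append_cons {L R : List α} {a : α} (h : a ∉ R) (b : α) :
    ((L ++ a :: R).reverse.set ((L ++ a :: R).reverse.idxOf a) b).reverse = L ++ b :: R := by
  have hrev : (L ++ a :: R).reverse = R.reverse ++ a :: L.reverse := by simp
  rw [hrev, set_idxOf_append_cons (by simpa using h)]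
  simp

end List

theorem stdWord_eq_mapIdx (u : List ℕ+) :
    stdWord u = u.mapIdx fun j a =>
      ((u.take (j + 1)).countP (· ≤ a) + (u.drop (j + 1)).countP (· < a)).toPNat' :=
  List.mapIdx_eq_mapIdx_iff.2 fun j _ => by rw [List.countP_lt_add_countP_take_eq]

theorem stdWord_append_cons_eq {L R : List ℕ+} {x y : ℕ+}
    (hL : ∀ a ∈ L, a ≤ x ↔ a ≤ y) (hR : ∀ a ∈ R, a < x ↔ a < y) :
    stdWord (L ++ x :: R) = stdWord (L ++ y :: R) := by
  simp only [stdWord_eq_mapIdx, List.mapIdx_append, List.mapIdx_cons]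
  congr 1
  · refine List.mapIdx_eq_mapIdx_iff.2 fun j hj => congrArg Nat.toPNat' ?_
    have hx : x < L[j] ↔ y < L[j] := by
      simpa only [not_le] using not_congr (hL _ (L.getElem_mem hj))
    simp [List.take_append_of_le_length hj, List.drop_append_of_le_length hj,
      List.countP_cons, hx]
  · congr 1
    · refine congrArg Nat.toPNat' ?_
      have hLc : L.countP (· ≤ x) = L.countP (· ≤ y) :=
        List.countP_congr fun a ha => by simpa using hL a ha
      have hRc : R.countP (· < x) = R.countP (· < y) :=
        List.countP_congr fun a ha => by simpa using hR a ha
      simp [List.take_length_add_append, List.drop_length_add_append, hLc, hRc]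
    · refine List.mapIdx_eq_mapIdx_iff.2 fun j hj => congrArg Nat.toPNat' ?_
      have hx : x ≤ R[j] ↔ y ≤ R[j] := by
        simpa only [not_lt] using not_congr (hR _ (R.getElem_mem hj))
      simp only [show j + 1 + L.length + 1 = L.length + (j + 2) by omega,
        List.take_length_add_append, List.drop_length_add_append]
      simp [List.countP_cons, hx]

theorem stdWord_append_succ_cons_eq {L R : List ℕ+} {i : ℕ+} (hL : i + 1 ∉ L) (hR : i ∉ R) :
    stdWord (L ++ (i + 1) :: R) = stdWord (L ++ i :: R) :=
  stdWord_append_cons_eq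
    (fun a ha => by
      rw [le_iff_lt_or_eq (b := i + 1), PNat.lt_add_one_iff,
        or_iff_left (ne_of_mem_of_not_mem ha hL)])
    (fun a ha => by
      rw [PNat.lt_add_one_iff, le_iff_lt_or_eq, or_iff_left (ne_of_mem_of_not_mem ha hR)])

/-- The quasi-Kashiwara operators preserve standardization. -/
theorem quasiKashiwara_preserves_std (u : List ℕ+) (i : ℕ+) :
    (qeDef i u → stdWord (qe i u) = stdWord u) ∧
    (qfDef i u → stdWord (qf i u) = stdWord u) := by
  constructor
  · rintro ⟨hpair, hmem⟩
    obtain ⟨L, R, rfl, hL⟩ := List.eq_append_cons_of_mem hmem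
    have hR : i ∉ R := fun h => hpair (List.pair_sublist_append_cons_of_mem_right h)
    rw [qe, List.set_idxOf_append_cons hL, stdWord_append_succ_cons_eq hL hR]
  · rintro ⟨hpair, hmem⟩
    obtain ⟨L, R, rfl, hR⟩ := List.exists_eq_append_cons_notMem_right hmem
    have hL : i + 1 ∉ L := fun h => hpair (List.pair_sublist_append_cons_of_mem_left h)
    rw [qf, List.reverse_set_idxOf_reverse_append_cons hR, stdWord_append_succ_cons_eq hL hR]
end

section
/- Let u be a word over the positive integers. Then ė_i(u) is defined if and only if the right strict binary search tree P_sylv(u) contains at least one node labelled i+1 but contains no node labelled i+1 in the right subtree of the topmost node labelled i. -/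
open BT

/-- The right subtree of the topmost node labelled `i` in a binary search
tree, if any node is labelled `i`. -/
def rightOfTop (i : ℕ+) : BT ℕ+ → Option (BT ℕ+)
  | .leaf => none
  | .node l a r =>
      if a = i then some r else if i < a then rightOfTop i l else rightOfTop i r

namespace BT

theorem mem_content_rIns {x a : ℕ+} {t : BT ℕ+} :
    x ∈ content (rIns a t) ↔ x = a ∨ x ∈ content t := by
  induction t with
  | leaf => simp [rIns, content]
  | node l y r ihl ihr =>
    rw [rIns]
    split_ifs <;> simp [content, ihl, ihr] <;> tauto

theorem isRBST_rIns {a : ℕ+} {t : BT ℕ+} (h : IsRBST t) : IsRBST (rIns a t) := by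
  induction t with
  | leaf => simp [rIns, IsRBST, content]
  | node l y r ihl ihr =>
    obtain ⟨hl, hr, hlt, hrt⟩ := h
    rw [rIns]
    split_ifs with hay
    · refine ⟨fun x hx => ?_, hr, ihl hlt, hrt⟩
      rcases mem_content_rIns.1 hx with rfl | hx
      exacts [hay, hl x hx]
    · refine ⟨hl, fun x hx => ?_, hlt, ihr hrt⟩
      rcases mem_content_rIns.1 hx with rfl | hx
      exacts [lt_of_not_ge hay, hr x hx]

theorem mem_content_node_of_lt {i a : ℕ+} {l r : BT ℕ+} (h : IsRBST (node l a r))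
    (hia : i < a) : i ∈ content (node l a r) ↔ i ∈ content l := by
  have hi : i ∉ content r := fun hi => (h.2.1 i hi).not_gt hia
  simp [content, hia.ne, hi]

theorem mem_content_node_of_gt {i a : ℕ+} {l r : BT ℕ+} (h : IsRBST (node l a r))
    (hai : a < i) : i ∈ content (node l a r) ↔ i ∈ content r := by
  have hi : i ∉ content l := fun hi => (h.1 i hi).not_gt hai
  simp [content, hai.ne', hi]

def SuccRightOfTop (i : ℕ+) (t : BT ℕ+) : Prop :=
  ∃ r, rightOfTop i t = some r ∧ i + 1 ∈ content r

section SuccRightOfTop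

variable {i a : ℕ+} {l r : BT ℕ+}

theorem succRightOfTop_leaf : ¬ SuccRightOfTop i leaf := by
  simp [SuccRightOfTop, rightOfTop]

theorem succRightOfTop_node_self : SuccRightOfTop i (node l i r) ↔ i + 1 ∈ content r := by
  simp [SuccRightOfTop, rightOfTop]

theorem succRightOfTop_node_of_lt (hia : i < a) :
    SuccRightOfTop i (node l a r) ↔ SuccRightOfTop i l := by
  simp [SuccRightOfTop, rightOfTop, hia.ne', hia]

theorem succRightOfTop_node_of_gt (hai : a < i) :
    SuccRightOfTop i (node l a r) ↔ SuccRightOfTop i r := by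
  simp [SuccRightOfTop, rightOfTop, hai.ne, hai.not_gt]

end SuccRightOfTop

/-- A new leaf `i + 1` follows the search path of `i` down to the topmost node labelled `i`,
then turns right. -/
theorem succRightOfTop_rIns {i b : ℕ+} {t : BT ℕ+} (h : IsRBST t) :
    SuccRightOfTop i (rIns b t) ↔ (b = i + 1 ∧ i ∈ content t) ∨ SuccRightOfTop i t := by
  induction t with
  | leaf =>
    rcases lt_trichotomy i b with hib | rfl | hbi
    · simp [rIns, succRightOfTop_node_of_lt hib, succRightOfTop_leaf, content]
    · simp [rIns, succRightOfTop_node_self, succRightOfTop_leaf, content]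
    · simp [rIns, succRightOfTop_node_of_gt hbi, succRightOfTop_leaf, content]
  | node l a r ihl ihr =>
    rcases lt_trichotomy i a with hia | rfl | hai
    · rw [mem_content_node_of_lt h hia, succRightOfTop_node_of_lt hia, rIns]
      split_ifs with hba
      · rw [succRightOfTop_node_of_lt hia, ihl h.2.2.1]
      · have hb : b ≠ i + 1 := by
          rintro rfl
          exact hba (PNat.add_one_le_iff.2 hia)
        simp [succRightOfTop_node_of_lt hia, hb]
    · rw [succRightOfTop_node_self, rIns]
      split_ifs with hbi
      · have hb : b ≠ i + 1 := by
          rintro rfl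
          exact (PNat.add_one_le_iff.1 hbi).false
        simp [succRightOfTop_node_self, hb]
      · simp [succRightOfTop_node_self, mem_content_rIns, content, eq_comm]
    · rw [mem_content_node_of_gt h hai, succRightOfTop_node_of_gt hai, rIns]
      split_ifs with hba
      · have hb : b ≠ i + 1 := by
          rintro rfl
          exact (PNat.add_one_le_iff.1 hba).not_gt hai
        simp [succRightOfTop_node_of_gt hai, hb]
      · rw [succRightOfTop_node_of_gt hai, ihr h.2.2.2]

end BT

theorem Psylv_cons (a : ℕ+) (u : List ℕ+) : Psylv (a :: u) = rIns a (Psylv u) := rfl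

theorem isRBST_Psylv (u : List ℕ+) : IsRBST (Psylv u) := by
  induction u with
  | nil => trivial
  | cons a u ih => exact isRBST_rIns ih

theorem mem_content_Psylv {x : ℕ+} {u : List ℕ+} : x ∈ content (Psylv u) ↔ x ∈ u := by
  induction u with
  | nil => simp [Psylv, content]
  | cons a u ih => rw [Psylv_cons, mem_content_rIns, ih, List.mem_cons]

theorem sublist_iff_succRightOfTop_Psylv (i : ℕ+) (u : List ℕ+) :
    List.Sublist [i + 1, i] u ↔ SuccRightOfTop i (Psylv u) := by
  induction u with
  | nil => simp [Psylv, succRightOfTop_leaf]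
  | cons a u ih =>
    rw [Psylv_cons, succRightOfTop_rIns (isRBST_Psylv u), ← ih, mem_content_Psylv,
      List.sublist_cons_iff]
    simp [eq_comm, or_comm]

/-- `ė i` is defined on `u` iff `Psylv u` contains a node labelled `i+1` but no
node labelled `i+1` in the right subtree of the topmost node labelled `i`. -/
theorem qeDef_iff_tree (u : List ℕ+) (i : ℕ+) :
    qeDef i u ↔
      ((i + 1) ∈ content (Psylv u) ∧
        ∀ r : BT ℕ+, rightOfTop i (Psylv u) = some r →
          (i + 1) ∉ content r) := by
  rw [qeDef, sublist_iff_succRightOfTop_Psylv, mem_content_Psylv, SuccRightOfTop]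
  push Not
  exact and_comm
end

section
/- A word u over the positive integers is highest-weight for the quasi-Kashiwara operators (i.e., ė_i(u) is undefined for all i) if and only if its right strict binary search tree P_sylv(u) satisfies: if the right interval partition of P_sylv(u) has ℓ parts, then for each a ∈ {1,...,ℓ}, all nodes in the a-th right interval are labelled a. -/
open BT

/-- The nodes of a tree in infix order, each paired with a flag recording
whether its right subtree is non-empty. -/
def infixNodes : BT ℕ+ → List (ℕ+ × Bool)
  | .leaf => []
  | .node l a r => infixNodes l ++ (a, decide (r ≠ BT.leaf)) :: infixNodes r


/-!
Right strict leaf insertion of `c` acts on the infix list of pairs (label, right subtree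
non-empty) by a list operation: `c` enters after all smaller labels, and its infix predecessor
acquires a non-empty right subtree. So `infixNodes (Psylv u)` can be studied by induction on `u`:
its labels are the letters of `u` in weakly increasing order, a flagged node is followed only by
larger labels, and, when `a + 1` occurs in `u`, a node labelled `a` is flagged iff `u` has a
letter `a + 1` to the left of a letter `a`.

The right-interval condition says that the labels start at `1` and increase by one exactly after
each flagged node. If `u` is highest weight, every letter `a + 1` has an `a` to its right, so the
letters of `u` form `{1, …, m}`: consecutive labels differ by at most one, and an increase from
`a` to `a + 1` happens at the flagged node labelled `a`. Conversely, under the interval condition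
the labels climb from `1` to any letter `a + 1` of `u` through a flagged node labelled `a`.
-/

namespace List

variable {α β : Type*}

@[simp]
theorem modifyLast_nil (f : α → α) : ([] : List α).modifyLast f = [] := rfl

theorem modifyLast_cons_of_ne_nil (f : α → α) (a : α) {l : List α} (hl : l ≠ []) :
    (a :: l).modifyLast f = a :: l.modifyLast f :=
  modifyLast_append_of_right_ne_nil f [a] l hl

theorem pairwise_modifyLast {R : α → α → Prop} {f : α → α} {l : List α}
    (hf : ∀ x y, R x y → R x (f y)) (hl : l.Pairwise R) : (l.modifyLast f).Pairwise R := by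
  obtain rfl | ⟨l, a, rfl⟩ := l.eq_nil_or_concat
  · exact hl
  rw [concat_eq_append, pairwise_append] at hl
  rw [concat_eq_append, modifyLast_concat, pairwise_append]
  exact ⟨hl.1, pairwise_singleton _ _, fun x hx y hy => by
    rw [mem_singleton.mp hy]; exact hf x a (hl.2.2 x hx a (mem_singleton_self a))⟩

theorem map_modifyLast {f : α → α} {g : α → β} (hfg : ∀ x, g (f x) = g x) (l : List α) :
    (l.modifyLast f).map g = l.map g := by
  obtain rfl | ⟨l, a, rfl⟩ := l.eq_nil_or_concat
  · rfl
  simp [modifyLast_concat, hfg]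

end List

theorem PNat.of_le_of_forall_succ {P : ℕ+ → Prop} (hP : ∀ i, P (i + 1) → P i) {a b : ℕ+}
    (hb : P b) (hab : a ≤ b) : P a := by
  induction b using PNat.recOn with
  | one => rwa [le_antisymm hab one_le]
  | succ n ih =>
    obtain rfl | hlt := hab.eq_or_lt
    · exact hb
    · exact ih (hP n hb) (PNat.lt_add_one_iff.mp hlt)

namespace Sylv

abbrev Node := ℕ+ × Bool

/-- The effect of `rIns c` on `infixNodes` (`infixNodes_rIns`): `c` becomes a leaf placed after
all smaller labels, and its infix predecessor now has a non-empty right subtree. -/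
def insertNode (c : ℕ+) (L : List Node) : List Node :=
  (L.filter (·.1 < c)).modifyLast (fun p => (p.1, true)) ++ (c, false) :: L.filter (c ≤ ·.1)

def infixModel (u : List ℕ+) : List Node := u.foldr insertNode []

def InfixRel (p q : Node) : Prop := p.1 ≤ q.1 ∧ (p.2 = true → p.1 < q.1)

theorem map_fst_insertNode_perm (c : ℕ+) (L : List Node) :
    ((insertNode c L).map Prod.fst).Perm (c :: L.map Prod.fst) := by
  have hsplit : (L.filter (·.1 < c) ++ L.filter (c ≤ ·.1)).Perm L := by
    convert L.filter_append_perm (·.1 < c) using 3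
    funext p
    rw [← decide_not]
    exact decide_eq_decide.mpr not_lt.symm
  rw [insertNode, List.map_append, List.map_cons,
    List.map_modifyLast (f := fun p : Node => (p.1, true)) (fun _ => rfl)]
  exact List.perm_middle.trans (.cons c (by simpa using hsplit.map Prod.fst))

theorem InfixRel.of_lt {p q : Node} (h : p.1 < q.1) : InfixRel p q := ⟨h.le, fun _ => h⟩

theorem pairwise_insertNode (c : ℕ+) {L : List Node} (hL : L.Pairwise InfixRel) :
    (insertNode c L).Pairwise InfixRel := by
  rw [insertNode, List.pairwise_append, List.pairwise_cons]
  refine ⟨List.pairwise_modifyLast (fun _ _ h => h) (hL.filter _),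
    ⟨fun y hy => ⟨by simpa using (List.mem_filter.mp hy).2, nofun⟩, hL.filter _⟩, ?_⟩
  intro x hx y hy
  have hxc : x.1 < c := by
    have hx' := List.mem_map_of_mem (f := Prod.fst) hx
    rw [List.map_modifyLast (f := fun p : Node => (p.1, true)) (fun _ => rfl)] at hx'
    obtain ⟨z, hz, hzx⟩ := List.mem_map.mp hx'
    simpa [← hzx] using (List.mem_filter.mp hz).2
  obtain rfl | hy := List.mem_cons.mp hy
  · exact .of_lt hxc
  · exact .of_lt (hxc.trans_le (by simpa using (List.mem_filter.mp hy).2))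

theorem isGreatest_map_fst_concat {F : List Node} {q : Node}
    (hF : (F ++ [q]).Pairwise (fun p q => p.1 ≤ q.1)) (a : ℕ+) :
    IsGreatest {b | b ∈ (F ++ [q]).map Prod.fst} a ↔ a = q.1 := by
  have hq : IsGreatest {b | b ∈ (F ++ [q]).map Prod.fst} q.1 := by
    refine ⟨by simp, ?_⟩
    rintro b hb
    simp only [List.map_append, List.map_cons, List.map_nil, List.mem_append, List.mem_map,
      List.mem_singleton, Set.mem_ofPred_eq] at hb
    obtain ⟨p, hp, rfl⟩ | rfl := hb
    · exact (List.pairwise_append.mp hF).2.2 p hp q (List.mem_singleton_self q)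
    · exact le_rfl
  exact ⟨fun h => h.unique hq, fun h => h ▸ hq⟩

theorem flag_mem_insertNode_iff {a c : ℕ+} {L : List Node}
    (hL : L.Pairwise (fun p q => p.1 ≤ q.1)) :
    (a, true) ∈ insertNode c L ↔
      (a, true) ∈ L ∨ IsGreatest {b | b ∈ L.map Prod.fst ∧ b < c} a := by
  have hS : {b | b ∈ L.map Prod.fst ∧ b < c} = {b | b ∈ (L.filter (·.1 < c)).map Prod.fst} := by
    ext b; simp
  have hL' : (a, true) ∈ L ↔
      (a, true) ∈ L.filter (·.1 < c) ∨ (a, true) ∈ L.filter (c ≤ ·.1) := by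
    simp only [List.mem_filter, decide_eq_true_eq, ← and_or_left, lt_or_ge, and_true]
  rw [insertNode, hS, hL']
  obtain hF | ⟨F, q, hF⟩ := (L.filter (·.1 < c)).eq_nil_or_concat
  · simp [hF, IsGreatest]
  · rw [List.concat_eq_append] at hF
    rw [hF, isGreatest_map_fst_concat (hF ▸ hL.filter _), List.modifyLast_concat]
    obtain ⟨x, _ | _⟩ := q <;> simp <;> tauto

theorem insertNode_append_of_le {c : ℕ+} {L R : List Node} (hR : ∀ p ∈ R, c ≤ p.1) :
    insertNode c (L ++ R) = insertNode c L ++ R := by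
  have h₁ : R.filter (·.1 < c) = [] := List.filter_eq_nil_iff.mpr (by simpa using hR)
  have h₂ : R.filter (c ≤ ·.1) = R := List.filter_eq_self.mpr (by simpa using hR)
  simp [insertNode, List.filter_append, h₁, h₂]

theorem insertNode_append_cons_of_lt {c x : ℕ+} {f : Bool} {L R : List Node}
    (hL : ∀ p ∈ L, p.1 < c) (hx : x < c) (hf : R ≠ [] → f = true) :
    insertNode c (L ++ (x, f) :: R) = L ++ (x, true) :: insertNode c R := by
  have h₁ : L.filter (·.1 < c) = L := List.filter_eq_self.mpr (by simpa using hL)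
  have h₂ : L.filter (c ≤ ·.1) = [] := List.filter_eq_nil_iff.mpr (by simpa using hL)
  simp only [insertNode, List.filter_append, List.filter_cons, h₁, h₂, hx, not_le.mpr hx,
    decide_true, decide_false, if_true, List.nil_append]
  by_cases hF : R.filter (·.1 < c) = []
  · obtain rfl | hfR := eq_or_ne R []
    · simp [List.modifyLast_concat]
    · simp [hF, hf hfR, List.modifyLast_concat]
  · have hfR : R ≠ [] := by rintro rfl; exact hF rfl
    rw [hf hfR, List.modifyLast_append_of_right_ne_nil _ _ _ (List.cons_ne_nil _ _),
      List.modifyLast_cons_of_ne_nil _ _ hF]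
    simp

theorem pairwise_infixModel (u : List ℕ+) : (infixModel u).Pairwise InfixRel := by
  induction u with
  | nil => exact List.Pairwise.nil
  | cons c u ih => exact pairwise_insertNode c ih

theorem map_fst_infixModel_perm (u : List ℕ+) : ((infixModel u).map Prod.fst).Perm u := by
  induction u with
  | nil => exact List.Perm.nil
  | cons c u ih => exact (map_fst_insertNode_perm c _).trans (ih.cons c)

theorem rIns_ne_leaf (a : ℕ+) : ∀ t : BT ℕ+, rIns a t ≠ .leaf
  | .leaf => nofun
  | .node l x r => by unfold rIns; split <;> exact nofun

theorem infixNodes_rIns (a : ℕ+) :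
    ∀ t : BT ℕ+, (infixNodes t).Pairwise (fun p q => p.1 ≤ q.1) →
      infixNodes (rIns a t) = insertNode a (infixNodes t)
  | .leaf, _ => rfl
  | .node l x r, ht => by
    rw [infixNodes, List.pairwise_append, List.pairwise_cons] at ht
    obtain ⟨hl, ⟨hxr, hr⟩, hlxr⟩ := ht
    by_cases hax : a ≤ x
    · rw [rIns, if_pos hax, infixNodes, infixNodes, infixNodes_rIns a l hl,
        insertNode_append_of_le]
      rintro p (_ | ⟨_, hp⟩)
      exacts [hax, hax.trans (hxr p hp)]
    · rw [not_le] at hax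
      have hlx (p) (hp : p ∈ infixNodes l) : p.1 < a :=
        (hlxr p hp _ List.mem_cons_self).trans_lt hax
      have hr_ne (h : infixNodes r ≠ []) : decide (r ≠ .leaf) = true :=
        decide_eq_true (by rintro rfl; exact h rfl)
      rw [rIns, if_neg (not_le.mpr hax), infixNodes, infixNodes, infixNodes_rIns a r hr,
        insertNode_append_cons_of_lt hlx hax hr_ne, decide_eq_true (rIns_ne_leaf a r)]

theorem infixNodes_Psylv (u : List ℕ+) : infixNodes (Psylv u) = infixModel u := by
  induction u with
  | nil => rfl
  | cons a u ih =>
    have hsorted := ih ▸ (pairwise_infixModel u).imp And.left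
    rw [Psylv, List.foldr_cons, ← Psylv, infixNodes_rIns a _ hsorted, ih]
    rfl

theorem mem_map_fst_infixModel {b : ℕ+} {u : List ℕ+} :
    b ∈ (infixModel u).map Prod.fst ↔ b ∈ u :=
  (map_fst_infixModel_perm u).mem_iff

theorem mem_of_mem_infixModel {p : Node} {u : List ℕ+} (hp : p ∈ infixModel u) : p.1 ∈ u :=
  mem_map_fst_infixModel.mp (List.mem_map_of_mem hp)

theorem flag_mem_infixModel_iff {a : ℕ+} {u : List ℕ+} (ha : a + 1 ∈ u) :
    (a, true) ∈ infixModel u ↔ [a + 1, a].Sublist u := by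
  induction u with
  | nil => simp at ha
  | cons c u ih =>
    have hS : {b | b ∈ (infixModel u).map Prod.fst ∧ b < c} = {b | b ∈ u ∧ b < c} := by
      simp only [mem_map_fst_infixModel]
    rw [infixModel, List.foldr_cons, ← infixModel,
      flag_mem_insertNode_iff ((pairwise_infixModel u).imp And.left), hS]
    obtain rfl | hc := eq_or_ne c (a + 1)
    · rw [List.cons_sublist_cons, List.singleton_sublist]
      refine ⟨?_, fun h => .inr ⟨⟨h, PNat.lt_add_right a 1⟩,
        fun b hb => PNat.lt_add_one_iff.mp hb.2⟩⟩
      rintro (h | h)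
      exacts [mem_of_mem_infixModel h, h.1.1]
    · have ha' : a + 1 ∈ u := (List.mem_cons.mp ha).resolve_left hc.symm
      have hsub : [a + 1, a].Sublist (c :: u) ↔ [a + 1, a].Sublist u := by
        simp [List.sublist_cons_iff, hc.symm]
      rw [hsub, ← ih ha', or_iff_left_iff_imp]
      rintro ⟨⟨-, hac⟩, hmax⟩
      have : a + 1 < c := lt_of_le_of_ne (PNat.add_one_le_iff.mpr hac) hc.symm
      exact absurd (hmax ⟨ha', this⟩) (not_le.mpr (PNat.lt_add_right a 1))

def IntervalStep (p q : Node) : Prop := (q.1 : ℕ) = p.1 + p.2.toNat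

theorem label_eq_countP_iff_isChain (L : List Node) (k : ℕ) :
    (∀ i : Fin L.length, ((L.get i).1 : ℕ) = k + (L.take i).countP (·.2) + 1) ↔
      (∀ p ∈ L.head?, (p.1 : ℕ) = k + 1) ∧ L.IsChain IntervalStep := by
  induction L generalizing k with
  | nil => simp
  | cons p L ih =>
    have hcount (i : ℕ) :
        ((p :: L).take (i + 1)).countP (·.2) = p.2.toNat + (L.take i).countP (·.2) := by
      rw [List.take_succ_cons, List.countP_cons, add_comm]
      cases p.2 <;> rfl
    rw [List.isChain_cons]
    simp only [List.get_eq_getElem] at ih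
    simp only [List.length_cons, Fin.forall_fin_succ, List.get_eq_getElem, Fin.val_zero,
      List.getElem_cons_zero, List.take_zero, List.countP_nil, add_zero, Fin.val_succ,
      List.getElem_cons_succ, hcount, ← add_assoc, ih, List.head?_cons, Option.mem_def,
      Option.some.injEq, forall_eq', IntervalStep]
    exact and_congr_right fun hp =>
      and_congr_left' (forall₂_congr fun q _ => by rw [hp, add_right_comm])

theorem right_intervals_iff_isChain (L : List Node) :
    (∀ (t : ℕ) (h : t < L.length),
        (L.get ⟨t, h⟩).1 = ((L.take t).countP (fun p => p.2) + 1).toPNat') ↔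
      (∀ p ∈ L.head?, (p.1 : ℕ) = 1) ∧ L.IsChain IntervalStep := by
  have h := label_eq_countP_iff_isChain L 0
  simp only [zero_add] at h
  rw [← h, Fin.forall_iff]
  refine forall₂_congr fun t ht => ?_
  rw [← PNat.coe_inj, Nat.toPNat'_coe, if_pos (Nat.succ_pos _)]

theorem le_fst_of_fst_lt_of_mem {A B : List Node} {p q r : Node}
    (hL : (A ++ p :: q :: B).Pairwise InfixRel) (hr : r ∈ A ++ p :: q :: B) (hpr : p.1 < r.1) :
    q.1 ≤ r.1 := by
  simp only [List.pairwise_append, List.pairwise_cons, List.mem_cons] at hL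
  simp only [List.mem_append, List.mem_cons] at hr
  obtain hr | rfl | rfl | hr := hr
  · exact absurd (hL.2.2 r hr p (.inl rfl)).1 (not_le.mpr hpr)
  · exact absurd hpr (lt_irrefl _)
  · exact le_rfl
  · exact (hL.2.1.2.1 r hr).1

theorem snd_eq_true_of_flag_mem {A B : List Node} {p q : Node}
    (hL : (A ++ p :: q :: B).Pairwise InfixRel) (hflag : (p.1, true) ∈ A ++ p :: q :: B)
    (hpq : p.1 < q.1) : p.2 = true := by
  simp only [List.pairwise_append, List.pairwise_cons, List.mem_cons] at hL
  simp only [List.mem_append, List.mem_cons] at hflag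
  obtain hA | hp | hq | hB := hflag
  · exact absurd ((hL.2.2 _ hA p (.inl rfl)).2 rfl) (lt_irrefl _)
  · rw [← hp]
  · exact absurd (congrArg Prod.fst hq) hpq.ne
  · exact absurd (hL.2.1.2.1 _ hB).1 (not_le.mpr hpq)

theorem flag_mem_of_isChain {L : List Node} (hL : L.IsChain IntervalStep) {k : ℕ}
    (hk : ∀ p ∈ L.head?, (p.1 : ℕ) = k) {r : Node} (hr : r ∈ L) {i : ℕ+} (hki : k ≤ i)
    (hir : (i : ℕ) < r.1) : (i, true) ∈ L := by
  induction L generalizing k with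
  | nil => simp at hr
  | cons p L ih =>
    have hpk : (p.1 : ℕ) = k := hk p rfl
    obtain rfl | hrL := List.mem_cons.mp hr
    · omega
    obtain ⟨q, L, rfl⟩ := List.exists_cons_of_ne_nil (List.ne_nil_of_mem hrL)
    obtain ⟨hpq, hqL⟩ := List.isChain_cons_cons.mp hL
    have hhead {k' : ℕ} (h : (q.1 : ℕ) = k') : ∀ p' ∈ (q :: L).head?, (p'.1 : ℕ) = k' := by
      rintro _ ⟨⟩; exact h
    rw [IntervalStep, hpk] at hpq
    cases hp : p.2
    · rw [hp, Bool.toNat_false, add_zero] at hpq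
      exact List.mem_cons_of_mem _ (ih hqL (hhead hpq) hrL hki)
    · rw [hp, Bool.toNat_true] at hpq
      obtain hik | hik := hki.eq_or_lt
      · exact List.mem_cons.mpr (.inl (Prod.ext (PNat.coe_inj.mp (hpk.trans hik)).symm hp.symm))
      · exact List.mem_cons_of_mem _ (ih hqL (hhead hpq) hrL hik)

theorem exists_mem_infixModel_fst_eq {b : ℕ+} {u : List ℕ+} (hb : b ∈ u) :
    ∃ r ∈ infixModel u, r.1 = b :=
  List.mem_map.mp (mem_map_fst_infixModel.mpr hb)

theorem mem_of_le_of_highestWeight {u : List ℕ+}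
    (hw : ∀ i : ℕ+, i + 1 ∈ u → [i + 1, i].Sublist u) {a b : ℕ+} (hb : b ∈ u) (hab : a ≤ b) :
    a ∈ u :=
  PNat.of_le_of_forall_succ (fun i hi => (hw i hi).subset (by simp)) hb hab

theorem head_eq_one_of_highestWeight {u : List ℕ+}
    (hw : ∀ i : ℕ+, i + 1 ∈ u → [i + 1, i].Sublist u) :
    ∀ p ∈ (infixModel u).head?, (p.1 : ℕ) = 1 := by
  intro p hp
  obtain ⟨M, hM⟩ := List.head?_eq_some_iff.mp hp
  obtain ⟨r, hr, hr1⟩ := exists_mem_infixModel_fst_eq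
    (mem_of_le_of_highestWeight hw (mem_of_mem_infixModel (hM ▸ List.mem_cons_self)) one_le)
  have hpr : p.1 ≤ r.1 := by
    have hpair := hM ▸ pairwise_infixModel u
    rw [hM] at hr
    obtain rfl | hr := List.mem_cons.mp hr
    exacts [le_rfl, (List.rel_of_pairwise_cons hpair hr).1]
  rw [hr1] at hpr
  simpa using le_antisymm hpr one_le

theorem isChain_of_highestWeight {u : List ℕ+}
    (hw : ∀ i : ℕ+, i + 1 ∈ u → [i + 1, i].Sublist u) : (infixModel u).IsChain IntervalStep := by
  rw [List.isChain_iff_forall_rel_of_append_cons_cons]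
  intro p q A B hM
  have hpair := hM ▸ pairwise_infixModel u
  have hpq : InfixRel p q :=
    List.rel_of_pairwise_cons (List.pairwise_append.mp hpair).2.1 List.mem_cons_self
  have hqu : q.1 ∈ u := mem_of_mem_infixModel (by simp [hM])
  have hsucc (hlt : p.1 < q.1) : q.1 = p.1 + 1 := by
    obtain ⟨r, hr, hr1⟩ := exists_mem_infixModel_fst_eq
      (mem_of_le_of_highestWeight hw hqu (PNat.add_one_le_iff.mpr hlt))
    rw [hM] at hr
    exact le_antisymm (hr1 ▸ le_fst_of_fst_lt_of_mem hpair hr (hr1 ▸ PNat.lt_add_right _ _))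
      (PNat.add_one_le_iff.mpr hlt)
  rw [IntervalStep]
  cases hp : p.2
  · obtain heq | hlt := hpq.1.eq_or_lt
    · simp [heq]
    · have hflag : (p.1, true) ∈ infixModel u :=
        (flag_mem_infixModel_iff (hsucc hlt ▸ hqu)).mpr (hw _ (hsucc hlt ▸ hqu))
      rw [hM] at hflag
      exact absurd (snd_eq_true_of_flag_mem hpair hflag hlt) (by simp [hp])
  · simp [hsucc (hpq.2 hp)]

theorem highestWeight_of_isChain {u : List ℕ+}
    (hhead : ∀ p ∈ (infixModel u).head?, (p.1 : ℕ) = 1)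
    (hchain : (infixModel u).IsChain IntervalStep) :
    ∀ i : ℕ+, i + 1 ∈ u → [i + 1, i].Sublist u := by
  intro i hi
  obtain ⟨r, hr, hr1⟩ := exists_mem_infixModel_fst_eq hi
  rw [← flag_mem_infixModel_iff hi]
  exact flag_mem_of_isChain hchain hhead hr i.pos (by simp [hr1])

end Sylv

/-- A word `u` is highest-weight (no `ė i` is defined on it) iff in `Psylv u`
every node in the `a`-th right interval is labelled `a`; that is, each node's
label equals one plus the number of earlier nodes (in infix order) having a
non-empty right subtree. -/
theorem highest_weight_iff_right_intervals (u : List ℕ+) :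
    (∀ i : ℕ+, ¬ qeDef i u) ↔
      ∀ (t : ℕ) (h : t < (infixNodes (Psylv u)).length),
        ((infixNodes (Psylv u)).get ⟨t, h⟩).1 =
          (((infixNodes (Psylv u)).take t).countP (fun p => p.2) + 1).toPNat' := by
  have hqe : (∀ i : ℕ+, ¬ qeDef i u) ↔ ∀ i : ℕ+, i + 1 ∈ u → [i + 1, i].Sublist u := by
    simp only [qeDef, not_and, not_imp_not]
  rw [hqe, Sylv.infixNodes_Psylv, Sylv.right_intervals_iff_isChain]
  exact ⟨fun hw => ⟨Sylv.head_eq_one_of_highestWeight hw, Sylv.isChain_of_highestWeight hw⟩,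
    fun h => Sylv.highestWeight_of_isChain h.1 h.2⟩
end

section
/- For any word u over the positive integers, the left recording tree Q computed during left strict insertion of u equals the increasing tree of std(u)⁻¹, and the right recording tree computed during right strict insertion of u equals the decreasing tree of std(u)⁻¹. -/
open BT

/-- Right strict leaf insertion of a (letter, index) pair, comparing letters. -/
def rInsP (p : ℕ+ × ℕ+) : BT (ℕ+ × ℕ+) → BT (ℕ+ × ℕ+)
  | .leaf => .node .leaf p .leaf
  | .node l x r =>
      if p.1 ≤ x.1 then .node (rInsP p l) x r else .node l x (rInsP p r)

/-- Left strict leaf insertion of a (letter, index) pair, comparing letters. -/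
def lInsP (p : ℕ+ × ℕ+) : BT (ℕ+ × ℕ+) → BT (ℕ+ × ℕ+)
  | .leaf => .node .leaf p .leaf
  | .node l x r =>
      if x.1 ≤ p.1 then .node l x (lInsP p r) else .node (lInsP p l) x r

/-- The recording tree of left strict insertion: the node created at step `i`
is labelled `i`. -/
def Qltree (u : List ℕ+) : BT ℕ+ :=
  ((u.mapIdx (fun j a => (a, (j + 1).toPNat'))).foldl
      (fun t p => lInsP p t) .leaf).map Prod.snd

/-- The recording tree of right strict insertion: the node created when
inserting the letter at position `j` (letters processed right to left) is
labelled `j`. -/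
def Qrtree (u : List ℕ+) : BT ℕ+ :=
  ((u.mapIdx (fun j a => (a, (j + 1).toPNat'))).foldr rInsP .leaf).map Prod.snd

/-
Tag each letter with its position. Both insertions compare letters only, but every new pair
comes later (left insertion) or earlier (right insertion) than all pairs already in the tree,
so ties are resolved exactly as in the lexicographic order on (letter, position): both are
binary search tree insertion for that total order. A binary search tree built by inserting
distinct keys has the first inserted key at its root and the smaller and larger keys in its
two subtrees, so its tree of positions is the increasing (resp. decreasing) tree of the
positions listed in lexicographic order of the pairs. That list is `std(u)⁻¹`, because
`std(u)` sends a position to one plus the lexicographic rank of its pair.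
-/

open BT List

theorem Prod.Lex.toLex_lt_toLex_iff_le {α β : Type*} [PartialOrder α] [Preorder β]
    {x y : α × β} (h : x.2 < y.2) : toLex x < toLex y ↔ x.1 ≤ y.1 := by
  simp [Prod.Lex.toLex_lt_toLex', h]

theorem Prod.Lex.toLex_lt_toLex_iff_lt {α β : Type*} [PartialOrder α] [Preorder β]
    {x y : α × β} (h : y.2 < x.2) : toLex x < toLex y ↔ x.1 < y.1 := by
  simp [Prod.Lex.toLex_lt_toLex, h.not_gt]

theorem List.foldr_min_eq_of_forall_le {α : Type*} [LinearOrder α] {w : List α} {b c : α}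
    (hb : b ∈ w) (hbw : ∀ y ∈ w, b ≤ y) (hbc : b ≤ c) : w.foldr min c = b := by
  apply le_antisymm
  · induction w with
    | nil => simp at hb
    | cons x w ih => grind
  · clear hb
    induction w with
    | nil => exact hbc
    | cons x w ih => grind

theorem List.foldr_max_eq_of_forall_le {α : Type*} [LinearOrder α] {w : List α} {b c : α}
    (hb : b ∈ w) (hbw : ∀ y ∈ w, y ≤ b) (hbc : c ≤ b) : w.foldr max c = b :=
  List.foldr_min_eq_of_forall_le (α := αᵒᵈ) hb hbw hbc

theorem List.countP_le_eq_countP_lt_add_countP_eq {α : Type*} [LinearOrder α] (l : List α)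
    (a : α) :
    l.countP (· ≤ a) = l.countP (· < a) + l.countP (· = a) := by
  induction l with
  | nil => rfl
  | cons x l ih =>
    simp only [countP_cons, ih, decide_eq_true_eq]
    grind

theorem List.countP_lt_getElem_of_pairwise {α β : Type*} [Preorder β] [DecidableLT β]
    (f : α → β) {l : List α} (h : l.Pairwise fun x y => f x < f y) (t : ℕ)
    (ht : t < l.length) :
    l.countP (fun x => f x < f l[t]) = t := by
  induction l generalizing t with
  | nil => simp at ht
  | cons x l ih =>
    rw [pairwise_cons] at h
    cases t with
    | zero =>
      simp only [getElem_cons_zero, countP_eq_zero, mem_cons, decide_eq_true_eq]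
      rintro y (rfl | hy)
      exacts [lt_irrefl _, (h.1 y hy).not_gt]
    | succ t =>
      rw [getElem_cons_succ, countP_cons, ih h.2 t (by simpa using ht),
        if_pos (by simpa using h.1 _ (getElem_mem _))]

theorem List.exists_perm_pairwise_lt {α β : Type*} [LinearOrder β] (f : α → β)
    (hf : Function.Injective f) {l : List α} (hl : l.Nodup) :
    ∃ M : List α, M.Perm l ∧ M.Pairwise fun x y => f x < f y := by
  refine ⟨l.mergeSort fun x y => f x ≤ f y, mergeSort_perm _ _, ?_⟩
  have hle := pairwise_mergeSort (le := fun x y => f x ≤ f y)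
    (by simpa using fun _ _ _ => le_trans) (by simpa using fun _ _ => le_total _ _) l
  exact (hle.and ((mergeSort_perm _ _).nodup_iff.2 hl)).imp
    fun ⟨hxy, hne⟩ => lt_of_le_of_ne (by simpa using hxy) (hf.ne hne)

section BSTInsertion

variable {r : ℕ+ → ℕ+ → Prop}
  {ins : ℕ+ × ℕ+ → BT (ℕ+ × ℕ+) → BT (ℕ+ × ℕ+)}

theorem foldl_insert_node
    (ins_node : ∀ p l x t, r x.2 p.2 →
      ins p (node l x t) = if toLex p < toLex x then node (ins p l) x t else node l x (ins p t))
    (L : List (ℕ+ × ℕ+)) (l t : BT (ℕ+ × ℕ+)) (x : ℕ+ × ℕ+)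
    (hL : ∀ p ∈ L, r x.2 p.2) :
    L.foldl (fun t p => ins p t) (node l x t) =
      node ((L.filter (fun p => toLex p < toLex x)).foldl (fun t p => ins p t) l) x
        ((L.filter (fun p => toLex x ≤ toLex p)).foldl (fun t p => ins p t) t) := by
  induction L generalizing l t with
  | nil => rfl
  | cons p L ih =>
    rw [forall_mem_cons] at hL
    rw [foldl_cons, ins_node p l x t hL.1]
    by_cases hp : toLex p < toLex x
    · simp [hp, hp.not_ge, ih _ _ hL.2]
    · simp [hp, not_lt.mp hp, ih _ _ hL.2]

-- `r` is the order in which positions are inserted: `<` for left and `>` for right insertion.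
theorem map_snd_foldl_insert_eq_build
    (ins_leaf : ∀ p, ins p leaf = node leaf p leaf)
    (ins_node : ∀ p l x t, r x.2 p.2 →
      ins p (node l x t) = if toLex p < toLex x then node (ins p l) x t else node l x (ins p t))
    {build : ℕ → List ℕ+ → BT ℕ+} (build_nil : ∀ n, build n [] = leaf)
    (build_split : ∀ n A b B, (∀ y ∈ A ++ B, r b y) →
      build (n + 1) (A ++ b :: B) = node (build n A) b (build n B))
    (n : ℕ) {L M : List (ℕ+ × ℕ+)} (hn : L.length ≤ n)
    (hL : L.Pairwise (fun p q => r p.2 q.2))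
    (hM : M.Perm L) (hMs : M.Pairwise (fun p q => toLex p < toLex q)) :
    (L.foldl (fun t p => ins p t) leaf).map Prod.snd = build n (M.map Prod.snd) := by
  induction n generalizing L M with
  | zero =>
    obtain rfl : L = [] := length_eq_zero_iff.mp (Nat.le_zero.mp hn)
    rw [hM.eq_nil, map_nil, build_nil]
    rfl
  | succ n ih =>
    cases L with
    | nil =>
      rw [hM.eq_nil, map_nil, build_nil]
      rfl
    | cons a L =>
      obtain ⟨P, Q, rfl⟩ := append_of_mem (hM.mem_iff.2 mem_cons_self)
      rw [pairwise_cons] at hL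
      have hPQ : (P ++ Q).Perm L := (perm_middle.symm.trans hM).cons_inv
      rw [pairwise_append, pairwise_cons] at hMs
      obtain ⟨hPs, ⟨hQ, hQs⟩, hPa⟩ := hMs
      have hP : ∀ p ∈ P, toLex p < toLex a := fun p hp => hPa p hp a mem_cons_self
      have hfilterP : (L.filter (fun p => toLex p < toLex a)).Perm P := by
        refine (hPQ.filter _).symm.trans ?_
        rw [filter_append, filter_eq_self.2 (by simpa using hP),
          filter_eq_nil_iff.2 (fun q hq => by simpa using (hQ q hq).le), append_nil]
      have hfilterQ : (L.filter (fun p => toLex a ≤ toLex p)).Perm Q := by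
        refine (hPQ.filter _).symm.trans ?_
        rw [filter_append, filter_eq_nil_iff.2 (fun p hp => by simpa using hP p hp),
          filter_eq_self.2 (by simpa using fun q hq => (hQ q hq).le), nil_append]
      have hlen : L.length ≤ n := Nat.le_of_succ_le_succ hn
      rw [foldl_cons, ins_leaf, foldl_insert_node ins_node L leaf leaf a hL.1, map_append,
        map_cons, build_split n _ _ _ ?root]
      case root =>
        rw [← map_append]
        intro y hy
        obtain ⟨p, hp, rfl⟩ := mem_map.1 hy
        exact hL.1 p (hPQ.subset hp)
      simp only [BT.map]
      rw [ih ((length_filter_le _ _).trans hlen) (hL.2.filter _) hfilterP.symm hPs,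
        ih ((length_filter_le _ _).trans hlen) (hL.2.filter _) hfilterQ.symm hQs]

end BSTInsertion

theorem lInsP_node {p x : ℕ+ × ℕ+} (h : x.2 < p.2) (l t : BT (ℕ+ × ℕ+)) :
    lInsP p (node l x t) =
      if toLex p < toLex x then node (lInsP p l) x t else node l x (lInsP p t) := by
  simp only [lInsP, Prod.Lex.toLex_lt_toLex_iff_lt h, ← not_le, ite_not]

theorem rInsP_node {p x : ℕ+ × ℕ+} (h : p.2 < x.2) (l t : BT (ℕ+ × ℕ+)) :
    rInsP p (node l x t) =
      if toLex p < toLex x then node (rInsP p l) x t else node l x (rInsP p t) := by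
  simp only [rInsP, Prod.Lex.toLex_lt_toLex_iff_le h]

theorem incAux_succ_append_cons (n : ℕ) (A : List ℕ+) (b : ℕ+) (B : List ℕ+)
    (h : ∀ y ∈ A ++ B, b < y) :
    incAux (n + 1) (A ++ b :: B) = node (incAux n A) b (incAux n B) := by
  have hA : b ∉ A := fun hb => lt_irrefl b (h b (mem_append_left B hb))
  have hmin : ∀ y ∈ A ++ b :: B, b ≤ y := by
    simpa [or_imp, forall_and] using fun y hy => (h y hy).le
  obtain ⟨c, w, hcw⟩ : ∃ c w, A ++ b :: B = c :: w := by cases A <;> exact ⟨_, _, rfl⟩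
  have hb : (c :: w).foldr min c = b := by
    rw [hcw] at hmin
    exact foldr_min_eq_of_forall_le (hcw ▸ by simp) hmin (hmin c mem_cons_self)
  rw [hcw, incAux]
  simp only [hb]
  rw [← hcw]
  simp [idxOf_append_of_notMem hA]

theorem decAux_succ_append_cons (n : ℕ) (A : List ℕ+) (b : ℕ+) (B : List ℕ+)
    (h : ∀ y ∈ A ++ B, y < b) :
    decAux (n + 1) (A ++ b :: B) = node (decAux n A) b (decAux n B) := by
  have hA : b ∉ A := fun hb => lt_irrefl b (h b (mem_append_left B hb))
  have hmax : ∀ y ∈ A ++ b :: B, y ≤ b := by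
    simpa [or_imp, forall_and] using fun y hy => (h y hy).le
  obtain ⟨c, w, hcw⟩ : ∃ c w, A ++ b :: B = c :: w := by cases A <;> exact ⟨_, _, rfl⟩
  have hb : (c :: w).foldr max c = b := by
    rw [hcw] at hmax
    exact foldr_max_eq_of_forall_le (hcw ▸ by simp) hmax (hmax c mem_cons_self)
  rw [hcw, decAux]
  simp only [hb]
  rw [← hcw]
  simp [idxOf_append_of_notMem hA]

theorem map_snd_foldl_lInsP_eq_incTree {L M : List (ℕ+ × ℕ+)}
    (hL : L.Pairwise (fun p q => p.2 < q.2))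
    (hM : M.Perm L) (hMs : M.Pairwise (fun p q => toLex p < toLex q)) :
    (L.foldl (fun t p => lInsP p t) leaf).map Prod.snd = incTree (M.map Prod.snd) :=
  map_snd_foldl_insert_eq_build (ins := lInsP) (build := incAux) (fun _ => rfl)
    (fun _ _ _ _ h => lInsP_node h _ _)
    (by rintro (_ | _) <;> rfl) incAux_succ_append_cons _ (by simp [hM.length_eq]) hL hM hMs

theorem map_snd_foldl_rInsP_eq_decTree {L M : List (ℕ+ × ℕ+)}
    (hL : L.Pairwise (fun p q => q.2 < p.2))
    (hM : M.Perm L) (hMs : M.Pairwise (fun p q => toLex p < toLex q)) :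
    (L.foldl (fun t p => rInsP p t) leaf).map Prod.snd = decTree (M.map Prod.snd) :=
  map_snd_foldl_insert_eq_build (r := fun s s' => s' < s) (ins := rInsP) (build := decAux)
    (fun _ => rfl)
    (fun _ _ _ _ h => rInsP_node h _ _)
    (by rintro (_ | _) <;> rfl) decAux_succ_append_cons _ (by simp [hM.length_eq]) hL hM hMs

def indexedWord (u : List ℕ+) : List (ℕ+ × ℕ+) := u.mapIdx fun j a => (a, (j + 1).toPNat')

theorem length_indexedWord (u : List ℕ+) : (indexedWord u).length = u.length := length_mapIdx

theorem getElem_indexedWord (u : List ℕ+) (j : ℕ) (hj : j < (indexedWord u).length) :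
    (indexedWord u)[j] = (u[j]'(by simpa [length_indexedWord] using hj), j.succPNat) :=
  getElem_mapIdx

theorem map_fst_indexedWord (u : List ℕ+) : (indexedWord u).map Prod.fst = u := by
  apply ext_getElem <;> simp [getElem_indexedWord, length_indexedWord]

theorem pairwise_indexedWord (u : List ℕ+) : (indexedWord u).Pairwise fun p q => p.2 < q.2 := by
  rw [pairwise_iff_getElem]
  intro i j _ _ hij
  simpa [getElem_indexedWord] using hij

theorem nodup_indexedWord (u : List ℕ+) : (indexedWord u).Nodup :=
  (pairwise_indexedWord u).imp fun h => ne_of_apply_ne Prod.snd h.ne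

theorem countP_toLex_lt_getElem_indexedWord (u : List ℕ+) (j : ℕ)
    (hj : j < (indexedWord u).length) :
    (indexedWord u).countP (fun q => toLex q < toLex (indexedWord u)[j]) =
      (u.take j).countP (· ≤ (indexedWord u)[j].1) +
        (u.drop (j + 1)).countP (· < (indexedWord u)[j].1) := by
  have hpair := pairwise_indexedWord u
  set Pl := indexedWord u
  set x := Pl[j]
  have hsplit : Pl = Pl.take j ++ x :: Pl.drop (j + 1) := by
    rw [getElem_cons_drop, take_append_drop]
  rw [hsplit, pairwise_append, pairwise_cons] at hpair
  obtain ⟨-, ⟨hafter, -⟩, hbefore⟩ := hpair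
  have hfst : ∀ (p : ℕ+ → ℕ+ → Prop) [DecidableRel p] (l : List (ℕ+ × ℕ+)),
      l.countP (fun q => p q.1 x.1) = (l.map Prod.fst).countP (p · x.1) := by
    intro p _ l
    rw [countP_map]
    rfl
  calc Pl.countP (fun q => toLex q < toLex x)
      = (Pl.take j).countP (fun q => toLex q < toLex x) +
          (Pl.drop (j + 1)).countP (fun q => toLex q < toLex x) := by
        conv_lhs => rw [hsplit]
        simp [countP_append]
    _ = (Pl.take j).countP (fun q => q.1 ≤ x.1) +
          (Pl.drop (j + 1)).countP (fun q => q.1 < x.1) := by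
        congr 1 <;> refine countP_congr fun q hq => ?_
        · simp [Prod.Lex.toLex_lt_toLex_iff_le (hbefore q hq x mem_cons_self)]
        · simp [Prod.Lex.toLex_lt_toLex_iff_lt (hafter q hq)]
    _ = _ := by
        rw [hfst (· ≤ ·), hfst (· < ·), map_take, map_drop, map_fst_indexedWord]

theorem stdWord_eq_map_countP (u : List ℕ+) :
    stdWord u = (indexedWord u).map fun p =>
      ((indexedWord u).countP (fun q => toLex q < toLex p) + 1).toPNat' := by
  apply ext_getElem
  · simp [stdWord, length_indexedWord]
  intro j hj hj'
  have hju : j < u.length := by simpa [stdWord] using hj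
  rw [getElem_map, countP_toLex_lt_getElem_indexedWord u j (by simpa using hj'),
    getElem_indexedWord]
  simp only [stdWord, getElem_mapIdx]
  congr 1
  have hu : u = u.take j ++ u[j] :: u.drop (j + 1) := by
    rw [getElem_cons_drop, take_append_drop]
  have htake : u.take (j + 1) = u.take j ++ [u[j]] := (take_append_getElem hju).symm
  generalize u[j] = a at hu htake ⊢
  rw [htake]
  conv_lhs => arg 1; rw [hu]
  simp [countP_le_eq_countP_lt_add_countP_eq]
  omega

theorem invWord_stdWord {u : List ℕ+} {M : List (ℕ+ × ℕ+)} (hM : M.Perm (indexedWord u))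
    (hMs : M.Pairwise fun p q => toLex p < toLex q) : invWord (stdWord u) = M.map Prod.snd := by
  set rank := fun p => ((indexedWord u).countP (fun q => toLex q < toLex p) + 1).toPNat'
  have hrank : ∀ t (ht : t < M.length), rank M[t] = t.succPNat := fun t ht => by
    simp only [rank, ← hM.countP_eq, countP_lt_getElem_of_pairwise toLex hMs t ht]
    rfl
  have hnodup : (stdWord u).Nodup := by
    have hsorted : M.map rank = (range M.length).map Nat.succPNat :=
      ext_getElem (by simp) fun t _ _ => by simp [hrank]
    rw [stdWord_eq_map_countP, ← (hM.map rank).nodup_iff, hsorted]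
    exact nodup_range.map Nat.succPNat_injective
  apply ext_getElem
  · simp [invWord, hM.length_eq, stdWord, length_indexedWord]
  intro t h1 h2
  have ht : t < M.length := by simpa using h2
  obtain ⟨j, hj, hPj⟩ := getElem_of_mem (hM.subset (getElem_mem ht))
  have hstd : (stdWord u)[j]'(by simpa [stdWord, length_indexedWord] using hj) = t.succPNat := by
    simp only [stdWord_eq_map_countP, getElem_map]
    exact hPj ▸ hrank t ht
  simp only [invWord, getElem_map, getElem_range, ← hPj, getElem_indexedWord]
  rw [show (t + 1).toPNat' = t.succPNat from rfl, ← hstd, hnodup.idxOf_getElem]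
  rfl

/-- The left recording tree of `u` is the increasing tree of `std(u)⁻¹`, and
the right recording tree of `u` is the decreasing tree of `std(u)⁻¹`. -/
theorem recording_trees_eq (u : List ℕ+) :
    Qltree u = incTree (invWord (stdWord u)) ∧
    Qrtree u = decTree (invWord (stdWord u)) := by
  obtain ⟨M, hM, hMs⟩ := exists_perm_pairwise_lt toLex toLex.injective (nodup_indexedWord u)
  rw [invWord_stdWord hM hMs]
  constructor
  · exact map_snd_foldl_lInsP_eq_incTree (pairwise_indexedWord u) hM hMs
  · rw [Qrtree, ← foldl_reverse]
    exact map_snd_foldl_rInsP_eq_decTree (pairwise_reverse.2 (pairwise_indexedWord u))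
      (hM.trans (reverse_perm _).symm) hMs
end

section
/- Let α, α', β, β' be words over the positive integers with |α| = |α'| and |β| = |β'|, and let k be a letter strictly greater than every letter of α, α', β, β', such that αkβ and α'kβ' are standard words. If the decreasing trees of αβ and α'β' have the same shape, then the decreasing trees of αkβ and α'kβ' have the same shape. -/
open BT

/-
Splitting a word `u = a ++ m :: b` at the first occurrence of its maximum `m` makes
`decTree u` the node with subtrees `decTree a` and `decTree b`, whose sizes are `|a|` and
`|b|`. So the shape of `decTree u` records the position of the maximum, and by induction the
shapes of the decreasing trees of every prefix and suffix of `u`. Inserting a letter `k` above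
all others between `α` and `β` gives the node with subtrees `decTree α` and `decTree β`.
-/

namespace BT

variable {α β : Type}

theorem shape_node (l : BT α) (a : α) (r : BT α) :
    shape (node l a r) = node (shape l) () (shape r) := rfl

theorem shape_node_inj {l r l' r' : BT α} {a a' : α} :
    shape (node l a r) = shape (node l' a' r') ↔ shape l = shape l' ∧ shape r = shape r' := by
  simp [shape_node]

theorem length_infixRead_eq_of_shape_eq {t t' : BT α} (h : shape t = shape t') :
    t.infixRead.length = t'.infixRead.length := by
  simpa [shape, infixRead_map] using congrArg (fun s => s.infixRead.length) h

end BT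

theorem List.foldr_max_eq_of_forall_le_s13 {α : Type*} [LinearOrder α] {l : List α} {a m : α}
    (hm : m ∈ l) (ha : a ≤ m) (h : ∀ x ∈ l, x ≤ m) : l.foldr max a = m := by
  refine le_antisymm ?_ (List.le_max_of_le' a hm le_rfl)
  clear hm
  induction l with
  | nil => exact ha
  | cons y l ih => exact max_le (h y mem_cons_self) (ih fun x hx => h x (mem_cons_of_mem y hx))

theorem List.foldr_max_mem_cons {α : Type*} [LinearOrder α] (a : α) (l : List α) :
    l.foldr max a ∈ a :: l := by
  induction l with
  | nil => exact mem_cons_self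
  | cons y l ih =>
    rcases max_choice y (l.foldr max a) with h | h <;> rw [foldr_cons, h]
    · simp
    · rcases mem_cons.mp ih with h' | h' <;> simp [h']

theorem decAux_congr_fuel :
    ∀ (n n' : ℕ) (u : List ℕ+), u.length ≤ n → u.length ≤ n' → decAux n u = decAux n' u
  | 0, n', u, hn, _ => by
    rw [List.eq_nil_of_length_eq_zero (Nat.le_zero.mp hn)]
    cases n' <;> rfl
  | _ + 1, n', [], _, _ => by cases n' <;> rfl
  | _ + 1, 0, _ :: _, _, hn' => by simp at hn'
  | n + 1, n' + 1, c :: l, hn, hn' => by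
    simp only [List.length_cons, Nat.add_le_add_iff_right] at hn hn'
    have hmem : (c :: l).foldr max c ∈ c :: l := by simpa using List.foldr_max_mem_cons c (c :: l)
    have hidx := List.idxOf_lt_length_iff.mpr hmem
    simp only [List.foldr_cons, List.length_cons] at hidx
    simp only [decAux]
    congr 1 <;> apply decAux_congr_fuel <;> simp <;> omega

theorem decTree_append_cons {a b : List ℕ+} {m : ℕ+} (ha : ∀ x ∈ a, x < m)
    (hb : ∀ x ∈ b, x ≤ m) : decTree (a ++ m :: b) = .node (decTree a) m (decTree b) := by
  have hle : ∀ x ∈ a ++ m :: b, x ≤ m := by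
    simp only [List.mem_append, List.mem_cons]
    rintro x (hx | rfl | hx)
    exacts [(ha x hx).le, le_rfl, hb x hx]
  have hidx : (a ++ m :: b).idxOf m = a.length := by
    rw [List.idxOf_append_of_notMem fun h => (ha m h).false, List.idxOf_cons_self, add_zero]
  obtain ⟨c, l, hcl⟩ := List.exists_cons_of_ne_nil (List.append_ne_nil_of_right_ne_nil a
    (List.cons_ne_nil m b))
  have hlen : a.length + b.length = l.length := by
    have := congrArg List.length hcl
    simp only [List.length_append, List.length_cons] at this
    omega
  have hmax : (c :: l).foldr max c = m :=
    List.foldr_max_eq_of_forall_le_s13 (hcl ▸ by simp) (hle c (by simp [hcl])) (hcl ▸ hle)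
  unfold decTree
  rw [hcl]
  simp only [List.length_cons, decAux]
  rw [hmax, ← hcl, hidx, List.take_left, show a ++ m :: b = (a ++ [m]) ++ b by simp,
    List.drop_left' (by simp),
    decAux_congr_fuel _ _ a (by omega) le_rfl, decAux_congr_fuel _ _ b (by omega) le_rfl]

theorem List.exists_eq_append_cons_max {α : Type*} [LinearOrder α] :
    ∀ {u : List α}, u ≠ [] → ∃ a m b, u = a ++ m :: b ∧ (∀ x ∈ a, x < m) ∧ ∀ x ∈ b, x ≤ m
  | [c], _ => ⟨[], c, [], rfl, by simp, by simp⟩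
  | c :: d :: l, _ => by
    obtain ⟨a, m, b, hu, ha, hb⟩ := exists_eq_append_cons_max (cons_ne_nil d l)
    rcases lt_or_ge c m with hcm | hmc
    · refine ⟨c :: a, m, b, by rw [hu, cons_append], ?_, hb⟩
      simpa [hcm] using ha
    · refine ⟨[], c, d :: l, rfl, by simp, ?_⟩
      simp only [hu, mem_append, mem_cons]
      rintro x (hx | rfl | hx)
      exacts [(ha x hx).le.trans hmc, hmc, (hb x hx).trans hmc]

theorem infixRead_decTree (u : List ℕ+) : (decTree u).infixRead = u := by
  rcases eq_or_ne u [] with rfl | hu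
  · rfl
  obtain ⟨a, m, b, rfl, ha, hb⟩ := u.exists_eq_append_cons_max hu
  rw [decTree_append_cons ha hb, BT.infixRead, infixRead_decTree a, infixRead_decTree b]
termination_by u.length
decreasing_by all_goals subst_vars; simp only [List.length_append, List.length_cons]; omega

theorem length_eq_of_shape_decTree_eq {u u' : List ℕ+}
    (h : shape (decTree u) = shape (decTree u')) : u.length = u'.length := by
  simpa only [infixRead_decTree] using BT.length_infixRead_eq_of_shape_eq h

theorem shape_decTree_take_drop {u u' : List ℕ+}
    (h : shape (decTree u) = shape (decTree u')) (n : ℕ) :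
    shape (decTree (u.take n)) = shape (decTree (u'.take n)) ∧
      shape (decTree (u.drop n)) = shape (decTree (u'.drop n)) := by
  rcases eq_or_ne u [] with rfl | hu
  · rw [List.eq_nil_of_length_eq_zero (length_eq_of_shape_decTree_eq h).symm]
    simp
  have hu' : u' ≠ [] := fun h' => hu (List.eq_nil_of_length_eq_zero
    (by rw [length_eq_of_shape_decTree_eq h, h', List.length_nil]))
  obtain ⟨a, m, b, rfl, ha, hb⟩ := u.exists_eq_append_cons_max hu
  obtain ⟨a', m', b', rfl, ha', hb'⟩ := u'.exists_eq_append_cons_max hu'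
  rw [decTree_append_cons ha hb, decTree_append_cons ha' hb', BT.shape_node_inj] at h
  obtain ⟨hl, hr⟩ := h
  have hlen := length_eq_of_shape_decTree_eq hl
  rcases le_or_gt n a.length with hn | hn
  · obtain ⟨ht, hd⟩ := shape_decTree_take_drop hl n
    rw [List.take_append_of_le_length hn, List.take_append_of_le_length (hlen ▸ hn),
      List.drop_append_of_le_length hn, List.drop_append_of_le_length (hlen ▸ hn),
      decTree_append_cons (fun x hx => ha x (List.mem_of_mem_drop hx)) hb,
      decTree_append_cons (fun x hx => ha' x (List.mem_of_mem_drop hx)) hb', BT.shape_node_inj]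
    exact ⟨ht, hd, hr⟩
  · obtain ⟨j, rfl⟩ : ∃ j, n = a.length + (j + 1) := ⟨n - a.length - 1, by omega⟩
    obtain ⟨ht, hd⟩ := shape_decTree_take_drop hr j
    rw [List.take_length_add_append, List.drop_length_add_append, hlen,
      List.take_length_add_append, List.drop_length_add_append, List.take_succ_cons,
      List.take_succ_cons, List.drop_succ_cons, List.drop_succ_cons,
      decTree_append_cons ha fun x hx => hb x (List.mem_of_mem_take hx),
      decTree_append_cons ha' fun x hx => hb' x (List.mem_of_mem_take hx), BT.shape_node_inj]
    exact ⟨⟨hl, ht⟩, hd⟩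
termination_by u.length
decreasing_by all_goals subst_vars; simp only [List.length_append, List.length_cons]; omega

theorem decTree_shape_insert_max_general (α α' β β' : List ℕ+) (k : ℕ+)
    (hα : α.length = α'.length)
    (hk : ∀ x ∈ α ++ α' ++ β ++ β', x < k)
    (hshape : shape (decTree (α ++ β)) = shape (decTree (α' ++ β'))) :
    shape (decTree (α ++ [k] ++ β)) = shape (decTree (α' ++ [k] ++ β')) := by
  simp only [List.mem_append, or_imp, forall_and] at hk
  obtain ⟨⟨⟨hkα, hkα'⟩, hkβ⟩, hkβ'⟩ := hk
  have hsplit := shape_decTree_take_drop hshape α.length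
  rw [List.take_left, List.take_left' hα.symm, List.drop_left, List.drop_left' hα.symm]
    at hsplit
  simp only [List.append_assoc, List.singleton_append]
  rw [decTree_append_cons hkα fun x hx => (hkβ x hx).le,
    decTree_append_cons hkα' fun x hx => (hkβ' x hx).le, BT.shape_node_inj]
  exact hsplit

/-- Inserting a new maximum letter `k` in corresponding positions of two
standard words whose decreasing trees have the same shape yields decreasing
trees of the same shape. -/
theorem decTree_shape_insert_max (α α' β β' : List ℕ+) (k : ℕ+)
    (hα : α.length = α'.length) (hβ : β.length = β'.length)
    (hk : ∀ x ∈ α ++ α' ++ β ++ β', x < k)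
    (hstd : IsStandard (α ++ [k] ++ β)) (hstd' : IsStandard (α' ++ [k] ++ β'))
    (hshape : shape (decTree (α ++ β)) = shape (decTree (α' ++ β'))) :
    shape (decTree (α ++ [k] ++ β)) = shape (decTree (α' ++ [k] ++ β')) :=
  decTree_shape_insert_max_general α α' β β' k hα hk hshape
end

section
/- Let α, α', β, β' be words over the positive integers with |α| = |α'| and |β| = |β'|, and let k be a letter strictly greater than every letter of α, α', β, β', such that αkβ and α'kβ' are standard words. If the increasing trees of αβ and α'β' have the same shape, then the increasing trees of αkβ and α'kβ' have the same shape. -/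
open BT

namespace List

variable {α : Type*}

theorem append_eq_append_cons_iff {x y s t : List α} {m : α} :
    x ++ y = s ++ m :: t ↔
      (∃ a, s = x ++ a ∧ y = a ++ m :: t) ∨ ∃ b, x = s ++ m :: b ∧ t = b ++ y := by
  constructor
  · intro h
    rcases append_eq_append_iff.1 h with ⟨a, rfl, rfl⟩ | ⟨c, rfl, hc⟩
    · exact Or.inl ⟨a, rfl, rfl⟩
    · rcases append_eq_cons_iff.1 hc.symm with ⟨rfl, rfl⟩ | ⟨b, rfl, rfl⟩
      · exact Or.inl ⟨[], by simp, rfl⟩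
      · exact Or.inr ⟨b, rfl, rfl⟩
  · rintro (⟨a, rfl, rfl⟩ | ⟨b, rfl, rfl⟩) <;> simp

variable [LinearOrder α]

theorem foldr_min_eq {w : List α} {a m : α} (hm : m ∈ w) (hle : ∀ z ∈ w, m ≤ z)
    (ha : m ≤ a) : w.foldr min a = m := by
  refine le_antisymm ?_ ?_
  · clear hle ha
    induction w with
    | nil => simp at hm
    | cons b w ih =>
      rcases mem_cons.1 hm with rfl | hm
      · exact min_le_left _ _
      · exact (min_le_right _ _).trans (ih hm)
  · clear hm
    induction w with
    | nil => exact ha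
    | cons b w ih =>
      exact le_min (hle b mem_cons_self) (ih fun z hz => hle z (mem_cons_of_mem _ hz))

theorem exists_eq_append_cons_first_min : ∀ {w : List α}, w ≠ [] →
    ∃ s m t, w = s ++ m :: t ∧ (∀ z ∈ s, m < z) ∧ ∀ z ∈ t, m ≤ z
  | [a], _ => ⟨[], a, [], rfl, by simp, by simp⟩
  | a :: b :: l, _ => by
    obtain ⟨s, m, t, hw, hs, ht⟩ := exists_eq_append_cons_first_min (cons_ne_nil b l)
    by_cases ham : a ≤ m
    · refine ⟨[], a, b :: l, rfl, by simp, ?_⟩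
      rw [hw, forall_mem_append, forall_mem_cons]
      exact ⟨fun z hz => ham.trans (hs z hz).le, ham, fun z hz => ham.trans (ht z hz)⟩
    · refine ⟨a :: s, m, t, by rw [hw, cons_append], ?_, ht⟩
      simpa [not_le.1 ham] using hs

end List

namespace BT

variable {α β : Type}

def size : BT α → ℕ
  | leaf => 0
  | node l _ r => l.size + r.size + 1

/-- Insert a new leaf labelled `a` at infix position `p`. -/
def insertAt : BT α → ℕ → α → BT α
  | leaf, _, a => node leaf a leaf
  | node l b r, p, a =>
      if p ≤ l.size then node (l.insertAt p a) b r else node l b (r.insertAt (p - l.size - 1) a)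

@[simp]
theorem size_map (f : α → β) : ∀ t : BT α, (t.map f).size = t.size
  | leaf => rfl
  | node l _ r => by simp only [map, size, size_map f l, size_map f r]

theorem map_insertAt (f : α → β) (a : α) : ∀ (t : BT α) (p : ℕ),
    (t.insertAt p a).map f = (t.map f).insertAt p (f a)
  | leaf, _ => rfl
  | node l b r, p => by
    by_cases hp : p ≤ l.size <;> simp [insertAt, map, hp, map_insertAt f a l, map_insertAt f a r]

theorem shape_insertAt (t : BT α) (p : ℕ) (a : α) :
    shape (t.insertAt p a) = (shape t).insertAt p () :=
  map_insertAt _ a t p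

end BT

open BT

theorem incAux_succ_append_cons_s14 {s t : List ℕ+} {m : ℕ+} (hs : ∀ z ∈ s, m < z)
    (ht : ∀ z ∈ t, m ≤ z) (n : ℕ) :
    incAux (n + 1) (s ++ m :: t) = .node (incAux n s) m (incAux n t) := by
  obtain ⟨a, l, hal⟩ : ∃ a l, s ++ m :: t = a :: l := by
    cases s with
    | nil => exact ⟨m, t, rfl⟩
    | cons a s => exact ⟨a, s ++ m :: t, rfl⟩
  have hle : ∀ z ∈ s ++ m :: t, m ≤ z :=
    List.forall_mem_append.2 ⟨fun z hz => (hs z hz).le, List.forall_mem_cons.2 ⟨le_rfl, ht⟩⟩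
  have hmin : (a :: l).foldr min a = m :=
    List.foldr_min_eq (hal ▸ List.mem_append_right s List.mem_cons_self) (hal ▸ hle)
      (hle a (hal ▸ List.mem_cons_self))
  have hidx : (s ++ m :: t).idxOf m = s.length := by
    rw [List.idxOf_append_of_notMem fun h => lt_irrefl m (hs m h), List.idxOf_cons_self,
      add_zero]
  rw [hal, incAux]
  simp only [hmin]
  rw [← hal, hidx]
  simp

theorem incAux_eq_incTree {u : List ℕ+} {n : ℕ} (h : u.length ≤ n) :
    incAux n u = incTree u := by
  rcases eq_or_ne u [] with rfl | hu
  · cases n <;> rfl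
  obtain ⟨s, m, t, rfl, hs, ht⟩ := List.exists_eq_append_cons_first_min hu
  obtain ⟨n, rfl⟩ : ∃ n', n = n' + 1 := ⟨n - 1, by simp at h; omega⟩
  have hlen : (s ++ m :: t).length = s.length + t.length + 1 := by
    rw [List.length_append, List.length_cons, add_assoc]
  rw [hlen] at h
  rw [incTree, hlen, incAux_succ_append_cons_s14 hs ht, incAux_succ_append_cons_s14 hs ht,
    incAux_eq_incTree (by omega : s.length ≤ n), incAux_eq_incTree (by omega : t.length ≤ n),
    incAux_eq_incTree (by omega : s.length ≤ s.length + t.length),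
    incAux_eq_incTree (by omega : t.length ≤ s.length + t.length)]
termination_by u.length
decreasing_by all_goals subst_vars; simp only [List.length_append, List.length_cons]; omega

theorem incTree_append_cons {s t : List ℕ+} {m : ℕ+} (hs : ∀ z ∈ s, m < z)
    (ht : ∀ z ∈ t, m ≤ z) :
    incTree (s ++ m :: t) = .node (incTree s) m (incTree t) := by
  rw [incTree, List.length_append, List.length_cons, ← add_assoc,
    incAux_succ_append_cons_s14 hs ht, incAux_eq_incTree (by omega), incAux_eq_incTree (by omega)]

theorem size_incTree (u : List ℕ+) : (incTree u).size = u.length := by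
  rcases eq_or_ne u [] with rfl | hu
  · rfl
  obtain ⟨s, m, t, rfl, hs, ht⟩ := List.exists_eq_append_cons_first_min hu
  rw [incTree_append_cons hs ht, size, size_incTree s, size_incTree t]
  simp only [List.length_append, List.length_cons]
  omega
termination_by u.length
decreasing_by all_goals subst_vars; simp only [List.length_append, List.length_cons]; omega

theorem incTree_insert_max {k : ℕ+} (x y : List ℕ+) (hk : ∀ z ∈ x ++ y, z < k) :
    incTree (x ++ k :: y) = (incTree (x ++ y)).insertAt x.length k := by
  rcases eq_or_ne (x ++ y) [] with hxy | hxy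
  · obtain ⟨rfl, rfl⟩ := List.append_eq_nil_iff.1 hxy
    simp [incTree, incAux, insertAt]
  obtain ⟨s, m, t, hsplit, hs, ht⟩ := List.exists_eq_append_cons_first_min hxy
  have hmk : m < k := hk m (by simp [hsplit])
  rw [hsplit, incTree_append_cons hs ht]
  rcases List.append_eq_append_cons_iff.1 hsplit with ⟨a, rfl, rfl⟩ | ⟨b, rfl, rfl⟩
  · have hs' : ∀ z ∈ x ++ k :: a, m < z := by
      rw [List.forall_mem_append] at hs ⊢
      exact ⟨hs.1, List.forall_mem_cons.2 ⟨hmk, hs.2⟩⟩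
    rw [show x ++ k :: (a ++ m :: t) = (x ++ k :: a) ++ m :: t by simp,
      incTree_append_cons hs' ht,
      incTree_insert_max x a fun z hz => hk z (by simp at hz ⊢; tauto), insertAt,
      if_pos (by simp [size_incTree])]
  · have ht' : ∀ z ∈ b ++ k :: y, m ≤ z := by
      rw [List.forall_mem_append] at ht ⊢
      exact ⟨ht.1, List.forall_mem_cons.2 ⟨hmk.le, ht.2⟩⟩
    rw [List.append_assoc, List.cons_append, incTree_append_cons hs ht',
      incTree_insert_max b y fun z hz => hk z (by simp at hz ⊢; tauto), insertAt,
      if_neg (by simp [size_incTree]), size_incTree]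
    congr 2
    simp
termination_by (x ++ y).length
decreasing_by all_goals subst_vars; simp only [List.length_append, List.length_cons]; omega

theorem incTree_shape_insert_max_general (α α' β β' : List ℕ+) (k : ℕ+)
    (hα : α.length = α'.length)
    (hk : ∀ x ∈ α ++ α' ++ β ++ β', x < k)
    (hshape : shape (incTree (α ++ β)) = shape (incTree (α' ++ β'))) :
    shape (incTree (α ++ [k] ++ β)) = shape (incTree (α' ++ [k] ++ β')) := by
  have shape_insert (x y : List ℕ+) (hxy : ∀ z ∈ x ++ y, z < k) :
      shape (incTree (x ++ [k] ++ y)) = (shape (incTree (x ++ y))).insertAt x.length () := by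
    rw [List.append_assoc, List.singleton_append, incTree_insert_max x y hxy, shape_insertAt]
  rw [shape_insert α β fun z hz => hk z (by simp at hz ⊢; tauto),
    shape_insert α' β' fun z hz => hk z (by simp at hz ⊢; tauto), hshape, hα]

/-- Inserting a new maximum letter `k` in corresponding positions of two
standard words whose increasing trees have the same shape yields increasing
trees of the same shape. -/
theorem incTree_shape_insert_max (α α' β β' : List ℕ+) (k : ℕ+)
    (hα : α.length = α'.length) (hβ : β.length = β'.length)
    (hk : ∀ x ∈ α ++ α' ++ β ++ β', x < k)
    (hstd : IsStandard (α ++ [k] ++ β)) (hstd' : IsStandard (α' ++ [k] ++ β'))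
    (hshape : shape (incTree (α ++ β)) = shape (incTree (α' ++ β'))) :
    shape (incTree (α ++ [k] ++ β)) = shape (incTree (α' ++ [k] ++ β')) :=
  incTree_shape_insert_max_general α α' β β' k hα hk hshape
end

section
/- For any word u over the positive integers, u is congruent under the sylvester congruence to the left-to-right postfix reading of its right strict binary search tree P_sylv(u); equivalently, P_sylv applied to the postfix reading of P_sylv(u) returns P_sylv(u). -/
open BT

/-!
Reading a right strict binary search tree `node l a r` in postfix order and reinserting from right
to left first inserts the root `a`, then the labels of `r`, which all exceed `a` and so go right,
then the labels of `l`, which are all `≤ a` and so go left; by induction both subtrees are rebuilt.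
Since `Psylv u` is itself a right strict binary search tree, this gives the theorem.
-/

namespace BT

theorem coe_postfixRead {α : Type} (t : BT α) : (postfixRead t : Multiset α) = content t := by
  induction t with
  | leaf => rfl
  | node l a r ihl ihr =>
    rw [postfixRead, content, ← Multiset.coe_add, ← Multiset.coe_add, ihl, ihr,
      Multiset.coe_singleton, ← Multiset.singleton_add, add_comm]

theorem mem_content_of_mem_postfixRead {α : Type} {x : α} {t : BT α} (h : x ∈ postfixRead t) :
    x ∈ content t := by
  rw [← coe_postfixRead]
  exact Multiset.mem_coe.2 h

theorem content_rIns (a : ℕ+) (t : BT ℕ+) : content (rIns a t) = a ::ₘ content t := by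
  induction t with
  | leaf => rfl
  | node l x r ihl ihr =>
    rw [rIns]
    split
    · rw [content, ihl, content, Multiset.cons_add, Multiset.cons_swap]
    · rw [content, ihr, content, Multiset.add_cons, Multiset.cons_swap]

theorem IsRBST.rIns (a : ℕ+) {t : BT ℕ+} (h : IsRBST t) : IsRBST (rIns a t) := by
  induction t with
  | leaf => simp [BT.rIns, IsRBST, content]
  | node l x r ihl ihr =>
    obtain ⟨hl, hr, hbl, hbr⟩ := h
    rw [BT.rIns]
    split
    case isTrue hax =>
      refine ⟨?_, hr, ihl hbl, hbr⟩
      simpa [content_rIns] using ⟨hax, hl⟩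
    case isFalse hax =>
      refine ⟨hl, ?_, hbl, ihr hbr⟩
      simpa [content_rIns] using ⟨lt_of_not_ge hax, hr⟩

theorem foldr_rIns_node_of_lt {a : ℕ+} (l r : BT ℕ+) {w : List ℕ+} (hw : ∀ x ∈ w, a < x) :
    w.foldr rIns (node l a r) = node l a (w.foldr rIns r) := by
  induction w with
  | nil => rfl
  | cons b w ih =>
    rw [List.forall_mem_cons] at hw
    rw [List.foldr_cons, ih hw.2, BT.rIns, if_neg (not_le.2 hw.1), List.foldr_cons]

theorem foldr_rIns_node_of_le {a : ℕ+} (l r : BT ℕ+) {w : List ℕ+} (hw : ∀ x ∈ w, x ≤ a) :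
    w.foldr rIns (node l a r) = node (w.foldr rIns l) a r := by
  induction w with
  | nil => rfl
  | cons b w ih =>
    rw [List.forall_mem_cons] at hw
    rw [List.foldr_cons, ih hw.2, BT.rIns, if_pos hw.1, List.foldr_cons]

end BT

theorem Psylv_postfixRead_of_isRBST {t : BT ℕ+} (h : IsRBST t) : Psylv (postfixRead t) = t := by
  induction t with
  | leaf => rfl
  | node l a r ihl ihr =>
    obtain ⟨hl, hr, hbl, hbr⟩ := h
    have hpl : ∀ x ∈ postfixRead l, x ≤ a := fun x hx => hl x (mem_content_of_mem_postfixRead hx)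
    have hpr : ∀ x ∈ postfixRead r, a < x := fun x hx => hr x (mem_content_of_mem_postfixRead hx)
    calc Psylv (postfixRead (node l a r))
        = (postfixRead l).foldr rIns ((postfixRead r).foldr rIns (node leaf a leaf)) := by
          rw [Psylv, postfixRead, List.foldr_append, List.foldr_append]; rfl
      _ = node (Psylv (postfixRead l)) a (Psylv (postfixRead r)) := by
          rw [foldr_rIns_node_of_lt _ _ hpr, foldr_rIns_node_of_le _ _ hpl]; rfl
      _ = node l a r := by rw [ihl hbl, ihr hbr]

/-- Every word is sylvester-congruent to the postfix reading of its right
strict binary search tree: `Psylv` of the postfix reading of `Psylv u`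
returns `Psylv u`. -/
theorem Psylv_postfixRead (u : List ℕ+) :
    Psylv (postfixRead (Psylv u)) = Psylv u :=
  Psylv_postfixRead_of_isRBST (isRBST_Psylv u)
end

section
/- If u and v are words over the positive integers with u ≡_sylv v (they insert to the same right strict binary search tree), then for any word w, uw ≡_sylv vw and wu ≡_sylv wv; that is, the relation 'same right strict binary search tree under insertion' is a congruence on the free monoid. -/
open BT

/-!
Inserting a word `u` into a tree `node l x r` sends its letters `≤ x` into `l` and the others
into `r`, in order. The subwords of `u` of letters `≤ x` and `> x` insert to the two prunings of
`Psylv u` at `x`, so they are determined by `Psylv u`; by induction on `t`, the tree obtained by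
inserting `u` into an arbitrary `t` depends only on `Psylv u`. Both halves of the congruence
follow, since `Psylv (u ++ w)` is `u` inserted into `Psylv w` and `Psylv (w ++ u)` is `w`
inserted into `Psylv u`.
-/

namespace BT

/-- On a right strict binary search tree, the subtree of labels `≤ x`. -/
def pruneLe (x : ℕ+) : BT ℕ+ → BT ℕ+
  | leaf => leaf
  | node l a r => if a ≤ x then node l a (pruneLe x r) else pruneLe x l

/-- On a right strict binary search tree, the subtree of labels `> x`. -/
def pruneGt (x : ℕ+) : BT ℕ+ → BT ℕ+
  | leaf => leaf
  | node l a r => if a ≤ x then pruneGt x r else node (pruneGt x l) a r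

theorem pruneLe_rIns (x a : ℕ+) (t : BT ℕ+) :
    pruneLe x (rIns a t) = if a ≤ x then rIns a (pruneLe x t) else pruneLe x t := by
  induction t with
  | leaf => split_ifs <;> simp [rIns, pruneLe, *]
  | node l b r ihl ihr =>
    by_cases hab : a ≤ b <;> by_cases hbx : b ≤ x
    · simp [rIns, pruneLe, hab, hbx, hab.trans hbx]
    · simp [rIns, pruneLe, hab, hbx, ihl]
    · by_cases hax : a ≤ x <;> simp [rIns, pruneLe, hab, hbx, hax, ihr]
    · have hax : ¬ a ≤ x := fun hax => hbx ((le_of_not_ge hab).trans hax)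
      simp [rIns, pruneLe, hab, hbx, hax]

theorem pruneGt_rIns (x a : ℕ+) (t : BT ℕ+) :
    pruneGt x (rIns a t) = if a ≤ x then pruneGt x t else rIns a (pruneGt x t) := by
  induction t with
  | leaf => split_ifs <;> simp [rIns, pruneGt, *]
  | node l b r ihl ihr =>
    by_cases hab : a ≤ b <;> by_cases hbx : b ≤ x
    · simp [rIns, pruneGt, hab, hbx, hab.trans hbx]
    · by_cases hax : a ≤ x <;> simp [rIns, pruneGt, hab, hbx, hax, ihl]
    · simp [rIns, pruneGt, hab, hbx, ihr]
    · have hax : ¬ a ≤ x := fun hax => hbx ((le_of_not_ge hab).trans hax)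
      simp [rIns, pruneGt, hab, hbx, hax]

theorem foldr_rIns_node (u : List ℕ+) (l r : BT ℕ+) (x : ℕ+) :
    u.foldr rIns (node l x r) =
      node ((u.filter (· ≤ x)).foldr rIns l) x ((u.filter (x < ·)).foldr rIns r) := by
  induction u with
  | nil => rfl
  | cons a u ih =>
    by_cases h : a ≤ x
    · simp [ih, rIns, h]
    · simp [ih, rIns, h, not_le.mp h]

end BT

open BT

theorem Psylv_filter_le (x : ℕ+) (u : List ℕ+) :
    Psylv (u.filter (· ≤ x)) = pruneLe x (Psylv u) := by
  induction u with
  | nil => rfl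
  | cons a u ih =>
    simp only [Psylv, List.foldr_cons] at ih ⊢
    rw [pruneLe_rIns, ← ih, List.filter_cons]
    by_cases h : a ≤ x <;> simp [h]

theorem Psylv_filter_gt (x : ℕ+) (u : List ℕ+) :
    Psylv (u.filter (x < ·)) = pruneGt x (Psylv u) := by
  induction u with
  | nil => rfl
  | cons a u ih =>
    simp only [Psylv, List.foldr_cons] at ih ⊢
    rw [pruneGt_rIns, ← ih, List.filter_cons]
    by_cases h : a ≤ x
    · simp [h, not_lt.mpr h]
    · simp [h, not_le.mp h]

theorem foldr_rIns_eq_of_Psylv_eq {u v : List ℕ+} (h : Psylv u = Psylv v) (t : BT ℕ+) :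
    u.foldr rIns t = v.foldr rIns t := by
  induction t generalizing u v with
  | leaf => exact h
  | node l x r ihl ihr =>
    have hle : Psylv (u.filter (· ≤ x)) = Psylv (v.filter (· ≤ x)) := by
      rw [Psylv_filter_le, Psylv_filter_le, h]
    have hgt : Psylv (u.filter (x < ·)) = Psylv (v.filter (x < ·)) := by
      rw [Psylv_filter_gt, Psylv_filter_gt, h]
    rw [foldr_rIns_node, foldr_rIns_node, ihl hle, ihr hgt]

/-- The relation "same right strict binary search tree under insertion" is a
congruence on the free monoid. -/
theorem Psylv_congruence (u v : List ℕ+) (h : Psylv u = Psylv v) (w : List ℕ+) :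
    Psylv (u ++ w) = Psylv (v ++ w) ∧ Psylv (w ++ u) = Psylv (w ++ v) := by
  simp only [Psylv, List.foldr_append]
  exact ⟨foldr_rIns_eq_of_Psylv_eq h _, congrArg (w.foldr rIns) h⟩
end

section
/- In every connected component of the quasi-crystal graph Γ(hypo) there is exactly one standard word; consequently, two words u and v lie in the same connected component if and only if std(u) = std(v). -/
open BT

/-- Two words are in the same connected component of the quasi-crystal graph
`Γ(hypo)`: one is obtained from the other by a sequence of quasi-Kashiwara
operators (`EqvGen` of the edge relation `v = ḟ i u`). -/
def SameComp (u v : List ℕ+) : Prop :=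
  Relation.EqvGen (fun u v => ∃ i : ℕ+, qfDef i u ∧ v = qf i u) u v

open List

section Ranks

variable {α β : Type*} [LinearOrder α] [LinearOrder β]

def ranks (l : List α) : List ℕ := l.map fun x => l.countP (· ≤ x)

def SameOrderType (l : List α) (l' : List β) : Prop :=
  ∃ h : l.length = l'.length,
    ∀ j k (hj : j < l.length) (hk : k < l.length), l[j] ≤ l[k] ↔ l'[j] ≤ l'[k]

theorem SameOrderType.lt_iff {l : List α} {l' : List β} (h : SameOrderType l l')
    {j k : ℕ} (hj : j < l.length) (hk : k < l.length) :
    l[j] < l[k] ↔ l'[j]'(h.1 ▸ hj) < l'[k]'(h.1 ▸ hk) := by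
  simpa only [not_le] using (h.2 k j hk hj).not

@[simp] theorem length_ranks (l : List α) : (ranks l).length = l.length := length_map _

@[simp] theorem getElem_ranks (l : List α) (j : ℕ) (hj : j < (ranks l).length) :
    (ranks l)[j] = l.countP (· ≤ l[j]'(by simpa using hj)) := getElem_map _

theorem countP_le_lt_countP_le {l : List α} {x y : α} (hy : y ∈ l) (hxy : x < y) :
    l.countP (· ≤ x) < l.countP (· ≤ y) := by
  induction l with
  | nil => simp at hy
  | cons z t ih =>
    have hmono : t.countP (· ≤ x) ≤ t.countP (· ≤ y) :=
      countP_mono_left fun w _ hw => by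
        simp only [decide_eq_true_eq] at hw ⊢
        exact hw.trans hxy.le
    simp only [countP_cons, decide_eq_true_eq]
    rcases mem_cons.1 hy with rfl | hy
    · simp [hxy.not_ge]; omega
    · have := ih hy
      split_ifs with h1 h2 <;> first | omega | exact absurd (h1.trans hxy.le) h2

theorem countP_le_le_countP_le_iff {l : List α} {x y : α} (hx : x ∈ l) :
    l.countP (· ≤ x) ≤ l.countP (· ≤ y) ↔ x ≤ y := by
  refine ⟨fun h => ?_, fun h => countP_mono_left fun z _ hz => ?_⟩
  · by_contra! hyx
    exact (countP_le_lt_countP_le hx hyx).not_ge h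
  · simp only [decide_eq_true_eq] at hz ⊢
    exact hz.trans h

theorem sameOrderType_ranks (l : List α) : SameOrderType (ranks l) l :=
  ⟨length_ranks l, fun j k hj hk => by
    simp only [getElem_ranks]
    exact countP_le_le_countP_le_iff (getElem_mem _)⟩

theorem SameOrderType.ranks_eq {l : List α} {l' : List β} (h : SameOrderType l l') :
    ranks l = ranks l' := by
  obtain ⟨hlen, hle⟩ := h
  refine ext_getElem (by simp [hlen]) fun j hj _ => ?_
  have hj' : j < l.length := by simpa using hj
  have hcount : ∀ a b, (∀ p ∈ l.zip l', p.1 ≤ a ↔ p.2 ≤ b) →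
      l.countP (· ≤ a) = l'.countP (· ≤ b) := fun a b hab => by
    conv_lhs => rw [← map_fst_zip hlen.le, countP_map]
    conv_rhs => rw [← map_snd_zip hlen.ge, countP_map]
    exact countP_congr fun p hp => by simpa using hab p hp
  simp only [getElem_ranks]
  refine hcount _ _ fun p hp => ?_
  obtain ⟨k, hk, rfl⟩ := mem_iff_getElem.1 hp
  simp only [getElem_zip]
  exact hle k j (by simp at hk; omega) hj'

theorem ranks_perm_of_nodup {l : List α} (hl : l.Nodup) :
    (ranks l).Perm ((range l.length).map (· + 1)) := by
  have hnodup : (ranks l).Nodup := hl.map_on fun x hx y hy h =>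
    le_antisymm ((countP_le_le_countP_le_iff hx).1 h.le) ((countP_le_le_countP_le_iff hy).1 h.ge)
  refine (subperm_of_subset hnodup fun c hc => ?_).perm_of_length_le (by simp)
  obtain ⟨x, hx, rfl⟩ := mem_map.1 hc
  have hpos : 0 < l.countP (· ≤ x) := countP_pos_iff.2 ⟨x, hx, by simp⟩
  have hle : l.countP (· ≤ x) ≤ l.length := countP_le_length
  exact mem_map.2 ⟨_, mem_range.2 (by omega : l.countP (· ≤ x) - 1 < l.length), by omega⟩

end Ranks

def lexKeys (u : List ℕ+) : List (ℕ+ ×ₗ ℕ) := u.zipIdx.map toLex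

@[simp] theorem length_lexKeys (u : List ℕ+) : (lexKeys u).length = u.length := by
  simp [lexKeys]

@[simp] theorem getElem_lexKeys (u : List ℕ+) (j : ℕ) (hj : j < (lexKeys u).length) :
    (lexKeys u)[j] = toLex (u[j]'(by simpa using hj), j) := by
  simp [lexKeys]

theorem nodup_lexKeys (u : List ℕ+) : (lexKeys u).Nodup :=
  ((nodup_zipIdx_map_snd u).of_map _).map toLex.injective

/-- `j + 1 - k` truncates to `0` once the offset `k` has passed `j`. -/
theorem countP_zipIdx_toLex_le (u : List ℕ+) (a : ℕ+) (j k : ℕ) :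
    (u.zipIdx k).countP (fun p => toLex p ≤ toLex (a, j)) =
      u.countP (· < a) + (u.take (j + 1 - k)).countP (· = a) := by
  induction u generalizing k with
  | nil => simp
  | cons b t ih =>
    rw [zipIdx_cons, countP_cons, ih]
    simp only [Prod.Lex.toLex_le_toLex]
    rcases le_or_gt k j with hkj | hjk
    · rw [show j + 1 - k = (j - k) + 1 by omega, take_succ_cons, countP_cons,
        show j + 1 - (k + 1) = j - k by omega]
      rcases lt_trichotomy b a with h | rfl | h
      · simp [h, h.ne]; omega
      · simp [hkj]; omega
      · simp [h.not_gt, h.ne']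
    · rw [show j + 1 - k = 0 by omega, show j + 1 - (k + 1) = 0 by omega]
      rcases lt_trichotomy b a with h | rfl | h
      · simp [h]
      · simp [hjk]
      · simp [h.not_gt, h.ne']

theorem countP_lexKeys_le (u : List ℕ+) (a : ℕ+) (j : ℕ) :
    (lexKeys u).countP (· ≤ toLex (a, j)) =
      u.countP (· < a) + (u.take (j + 1)).countP (· = a) := by
  rw [lexKeys, countP_map]
  exact countP_zipIdx_toLex_le u a j 0

theorem stdWord_eq_map_ranks (u : List ℕ+) : stdWord u = (ranks (lexKeys u)).map Nat.toPNat' := by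
  refine ext_getElem (by simp [stdWord]) fun j hj _ => ?_
  rw [getElem_map, getElem_ranks, getElem_lexKeys, countP_lexKeys_le]
  simp [stdWord]

theorem isStandard_stdWord (u : List ℕ+) : IsStandard (stdWord u) := by
  have hperm := (ranks_perm_of_nodup (nodup_lexKeys u)).map Nat.toPNat'
  rw [map_map] at hperm
  rw [IsStandard, stdWord_eq_map_ranks]
  simpa [Function.comp_def] using hperm

theorem sameOrderType_stdWord (u : List ℕ+) : SameOrderType (stdWord u) (lexKeys u) := by
  have hpos : ∀ r ∈ ranks (lexKeys u), 0 < r := fun r hr => by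
    obtain ⟨c, -, rfl⟩ := mem_map.1 ((ranks_perm_of_nodup (nodup_lexKeys u)).subset hr)
    omega
  rw [stdWord_eq_map_ranks]
  refine ⟨by simp, fun j k hj hk => ?_⟩
  simp only [getElem_map, ← PNat.coe_le_coe, PNat.toPNat'_coe (hpos _ (getElem_mem _))]
  exact (sameOrderType_ranks _).2 j k (by simpa using hj) (by simpa using hk)

theorem countP_range_lt (c n : ℕ) : (range n).countP (· < c) = min c n := by
  induction n with
  | zero => simp
  | succ n ih =>
    rw [range_succ, countP_append, ih]
    by_cases h : n < c <;> simp [h] <;> omega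

theorem IsStandard.nodup {w : List ℕ+} (hw : IsStandard w) : w.Nodup :=
  hw.nodup_iff.2 <| nodup_range.map fun a b h => by simpa using congrArg PNat.val h

theorem IsStandard.coe_getElem_le {t : List ℕ+} (ht : IsStandard t) {j : ℕ}
    (hj : j < t.length) : (t[j] : ℕ) ≤ t.length := by
  obtain ⟨i, hi, hti⟩ := mem_map.1 (ht.subset (getElem_mem hj))
  rw [← hti, PNat.toPNat'_coe (by omega)]
  simp at hi
  omega

theorem IsStandard.exists_getElem_eq {t : List ℕ+} (ht : IsStandard t) {r : ℕ} (hr : 0 < r)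
    (hrt : r ≤ t.length) : ∃ q, ∃ hq : q < t.length, (t[q] : ℕ) = r := by
  obtain ⟨q, hq, htq⟩ := mem_iff_getElem.1 <|
    ht.symm.subset (mem_map.2 ⟨r - 1, mem_range.2 (by omega), rfl⟩)
  exact ⟨q, hq, by rw [htq, PNat.toPNat'_coe (by omega)]; omega⟩

theorem IsStandard.ranks_eq {w : List ℕ+} (hw : IsStandard w) : ranks w = w.map (↑) := by
  refine ext_getElem (by simp) fun j hj _ => ?_
  have hj' : j < w.length := by simpa using hj
  have hcoe : ∀ i : ℕ, ((i + 1).toPNat' : ℕ) = i + 1 := fun i => PNat.toPNat'_coe (by omega)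
  rw [getElem_ranks, getElem_map, hw.countP_eq, countP_map,
    countP_congr (q := (· < (w[j] : ℕ))) fun x _ => by simp [← PNat.coe_le_coe, hcoe],
    countP_range_lt]
  have := hw.coe_getElem_le hj'
  omega

theorem sameOrderType_lexKeys_of_nodup {w : List ℕ+} (hw : w.Nodup) :
    SameOrderType (lexKeys w) w :=
  ⟨length_lexKeys w, fun j k hj hk => by
    simp only [length_lexKeys] at hj hk
    simp only [getElem_lexKeys, Prod.Lex.toLex_le_toLex, le_iff_lt_or_eq (a := w[j]),
      hw.getElem_inj_iff]
    exact or_congr_right ⟨And.left, fun h => ⟨h, h.le⟩⟩⟩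

theorem stdWord_of_isStandard {w : List ℕ+} (hw : IsStandard w) : stdWord w = w := by
  rw [stdWord_eq_map_ranks, (sameOrderType_lexKeys_of_nodup hw.nodup).ranks_eq, hw.ranks_eq,
    map_map]
  conv_rhs => rw [← map_id w]
  exact map_congr_left fun x _ => PNat.coe_toPNat' x

section Operator

variable {i : ℕ+}

theorem qf_append {a b : List ℕ+} (hb : i ∉ b) : qf i (a ++ i :: b) = a ++ (i + 1) :: b := by
  have hidx : (b.reverse ++ i :: a.reverse).idxOf i = b.reverse.length := by
    rw [idxOf_append, if_neg (by simpa using hb), idxOf_cons_self, zero_add]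
  simp only [qf, reverse_append, reverse_cons, append_assoc, singleton_append, hidx]
  rw [set_append_right _ _ le_rfl, Nat.sub_self, set_cons_zero]
  simp

theorem qf_eq_set {u : List ℕ+} {p : ℕ} (hp : p < u.length) (hpi : u[p] = i)
    (hlast : ∀ k (hk : k < u.length), p < k → u[k] ≠ i) : qf i u = u.set p (i + 1) := by
  have hdrop : i ∉ u.drop (p + 1) := fun h => by
    obtain ⟨j, hj, hji⟩ := mem_drop_iff_getElem.1 h
    exact hlast _ _ (by omega) hji
  rw [set_eq_take_append_cons_drop, if_pos hp, ← qf_append hdrop]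
  conv_lhs => rw [← take_append_drop p u, drop_eq_getElem_cons hp, hpi]

theorem exists_last_getElem_eq {u : List ℕ+} (h : i ∈ u) :
    ∃ p, ∃ hp : p < u.length, u[p] = i ∧ ∀ k (hk : k < u.length), p < k → u[k] ≠ i := by
  obtain ⟨as, bs, hrev, has⟩ := eq_append_cons_of_mem (mem_reverse.2 h)
  have hu : u = bs.reverse ++ i :: as.reverse := by simpa using congrArg reverse hrev
  subst hu
  refine ⟨bs.length, by simp, by simp, fun k hk hpk hki => has ?_⟩
  rw [getElem_append_right (by simp; omega)] at hki
  simp only [length_reverse] at hki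
  rw [getElem_cons, dif_neg (by omega)] at hki
  exact mem_reverse.1 (hki ▸ getElem_mem _)

theorem stdWord_set_add_one {u : List ℕ+} {p : ℕ} (hp : p < u.length) (hpi : u[p] = i)
    (hi : ∀ k (hk : k < u.length), u[k] = i → k ≤ p)
    (hi1 : ∀ k (hk : k < u.length), u[k] = i + 1 → p < k) :
    stdWord (u.set p (i + 1)) = stdWord u := by
  rw [stdWord_eq_map_ranks, stdWord_eq_map_ranks]
  refine congrArg _ (SameOrderType.ranks_eq ⟨by simp, fun j k hj hk => ?_⟩)
  simp only [length_lexKeys, length_set] at hj hk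
  have := hi j hj; have := hi k hk; have := hi1 j hj; have := hi1 k hk
  simp only [getElem_lexKeys, getElem_set, Prod.Lex.toLex_le_toLex]
  split_ifs <;> subst_vars <;>
    simp only [← PNat.coe_lt_coe, ← PNat.coe_inj, PNat.add_coe, PNat.one_coe, true_and] at * <;>
    omega

theorem stdWord_qf {u : List ℕ+} (h : qfDef i u) : stdWord (qf i u) = stdWord u := by
  obtain ⟨hnsub, hmem⟩ := h
  obtain ⟨p, hp, hpi, hlast⟩ := exists_last_getElem_eq hmem
  have hpw : u.Pairwise fun a b => ¬(a = i + 1 ∧ b = i) :=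
    pairwise_of_forall_sublist fun hab ⟨ha, hb⟩ => hnsub (ha ▸ hb ▸ hab)
  rw [qf_eq_set hp hpi hlast]
  refine stdWord_set_add_one hp hpi (fun k hk hki => ?_) (fun k hk hki => ?_)
  · by_contra! hpk
    exact hlast k hk hpk hki
  · by_contra! hkp
    rcases hkp.lt_or_eq with hkp | rfl
    · exact pairwise_iff_getElem.1 hpw k p hk hp hkp ⟨hki, hpi⟩
    · exact (PNat.lt_add_right i 1).ne (hpi ▸ hki)

theorem SameComp.stdWord_eq {u v : List ℕ+} (h : SameComp u v) : stdWord u = stdWord v := by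
  induction h with
  | rel a b hab =>
    obtain ⟨i, hdef, rfl⟩ := hab
    exact (stdWord_qf hdef).symm
  | refl => rfl
  | symm _ _ _ ih => exact ih.symm
  | trans _ _ _ _ _ ih₁ ih₂ => exact ih₁.trans ih₂

end Operator

theorem sameComp_set_add_one {w : List ℕ+} {p : ℕ} {x : ℕ+} (hp : p < w.length)
    (hpx : w[p] = x) (hlast : ∀ k (hk : k < w.length), p < k → w[k] ≠ x) (hx1 : x + 1 ∉ w) :
    SameComp w (w.set p (x + 1)) :=
  .rel _ _ ⟨x, ⟨fun h => hx1 (h.subset (mem_cons_self ..)), hpx ▸ getElem_mem hp⟩,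
    (qf_eq_set hp hpx hlast).symm⟩

theorem sameComp_set_of_gap {w : List ℕ+} {p : ℕ} {y : ℕ+} (hp : p < w.length)
    (hpy : w[p] ≤ y)
    (hw : ∀ k (hk : k < w.length), k ≠ p →
      w[k] < w[p] ∨ (w[k] = w[p] ∧ k < p) ∨ y < w[k]) :
    SameComp w (w.set p y) := by
  obtain ⟨d, hd⟩ : ∃ d, (y : ℕ) = w[p] + d :=
    ⟨y - w[p], by rw [← PNat.coe_le_coe] at hpy; omega⟩
  clear hpy
  induction d generalizing w with
  | zero =>
    rw [show y = w[p] from PNat.coe_injective hd, set_getElem_self]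
    exact .refl _
  | succ d ih =>
    simp only [← PNat.coe_lt_coe, ← PNat.coe_inj] at hw
    have hstep : SameComp w (w.set p (w[p] + 1)) := by
      refine sameComp_set_add_one hp rfl (fun k hk hpk hkp => ?_) fun hmem => ?_
      · have := hw k hk (by omega)
        rw [← PNat.coe_inj] at hkp
        omega
      · obtain ⟨k, hk, hkp⟩ := mem_iff_getElem.1 hmem
        rw [← PNat.coe_inj, PNat.add_coe, PNat.one_coe] at hkp
        rcases eq_or_ne k p with rfl | hkp'
        · omega
        · have := hw k hk hkp'
          omega
    have hlen : p < (w.set p (w[p] + 1)).length := by simpa using hp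
    have hrest := ih hlen (fun k hk hkp => ?_) (by simp [hd]; omega)
    · rw [set_set] at hrest
      exact hstep.trans _ _ _ hrest
    · simp only [length_set] at hk
      rw [getElem_set_ne (Ne.symm hkp), getElem_set_self]
      have := hw k hk hkp
      simp only [← PNat.coe_lt_coe, ← PNat.coe_inj, PNat.add_coe, PNat.one_coe]
      omega

def liftAbove (C : ℕ+) (m : ℕ) (u t : List ℕ+) : List ℕ+ :=
  zipWith (fun (a r : ℕ+) => if m < (r : ℕ) then r + C else a) u t

section Lift

variable {u t : List ℕ+} {C : ℕ+}

theorem length_liftAbove (hlen : t.length = u.length) (m : ℕ) :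
    (liftAbove C m u t).length = u.length := by
  simp [liftAbove, hlen]

theorem getElem_liftAbove (m : ℕ) {j : ℕ} (hju : j < u.length) (hjt : j < t.length) :
    (liftAbove C m u t)[j]'(by simp [liftAbove]; omega) =
      if m < (t[j] : ℕ) then t[j] + C else u[j] := by
  simp [liftAbove]

theorem liftAbove_length_eq_self (ht : IsStandard t) (hlen : t.length = u.length) :
    liftAbove C u.length u t = u :=
  ext_getElem (length_liftAbove hlen _) fun j hj _ => by
    have hju : j < u.length := by rwa [length_liftAbove hlen] at hj
    rw [getElem_liftAbove _ hju (hlen ▸ hju),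
      if_neg (not_lt.2 ((ht.coe_getElem_le _).trans hlen.le))]

theorem liftAbove_zero (hlen : t.length = u.length) : liftAbove C 0 u t = t.map (· + C) :=
  ext_getElem (by simp [length_liftAbove hlen, hlen]) fun j hj _ => by
    have hju : j < u.length := by rwa [length_liftAbove hlen] at hj
    rw [getElem_liftAbove _ hju (hlen ▸ hju), if_pos (PNat.pos _), getElem_map]

theorem liftAbove_eq_set (ht : IsStandard t) (hlen : t.length = u.length) {m q : ℕ}
    (hq : q < t.length) (htq : (t[q] : ℕ) = m + 1) :
    liftAbove C m u t = (liftAbove C (m + 1) u t).set q (t[q] + C) :=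
  ext_getElem (by simp [length_liftAbove hlen]) fun j hj _ => by
    have hju : j < u.length := by rwa [length_liftAbove hlen] at hj
    rw [getElem_set, getElem_liftAbove _ hju (hlen ▸ hju), getElem_liftAbove _ hju (hlen ▸ hju)]
    by_cases hqj : q = j
    · subst hqj
      rw [if_pos rfl, if_pos (by omega)]
    · have : (t[j]'(hlen ▸ hju) : ℕ) ≠ m + 1 := fun h =>
        hqj (ht.nodup.getElem_inj_iff.1 (PNat.coe_injective (htq.trans h.symm)))
      rw [if_neg hqj]
      split_ifs <;> first | rfl | omega

/-- The letter of rank `m + 1` is raised from `u[q] ≤ C` to `m + 1 + C`: the letters already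
lifted are larger, and the others come before it in the order of `lexKeys u`. -/
theorem sameComp_liftAbove_succ (ht : IsStandard t) (hut : SameOrderType t (lexKeys u))
    (hC : ∀ a ∈ u, a ≤ C) {m : ℕ} (hm : m < u.length) :
    SameComp (liftAbove C (m + 1) u t) (liftAbove C m u t) := by
  have hlen : t.length = u.length := by simpa using hut.1
  obtain ⟨q, hq, htq⟩ := ht.exists_getElem_eq (r := m + 1) (by omega) (by omega)
  have hqu : q < u.length := hlen ▸ hq
  rw [liftAbove_eq_set ht hlen hq htq]
  refine sameComp_set_of_gap (by rwa [length_liftAbove hlen]) ?_ fun k hk hkq => ?_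
  · rw [getElem_liftAbove _ hqu hq, if_neg (by omega)]
    exact (hC _ (getElem_mem _)).trans (PNat.lt_add_left C t[q]).le
  · have hku : k < u.length := by rwa [length_liftAbove hlen] at hk
    have hkt : k < t.length := hlen ▸ hku
    rw [getElem_liftAbove _ hku hkt, getElem_liftAbove _ hqu hq,
      if_neg (show ¬ m + 1 < (t[q] : ℕ) by omega)]
    split_ifs with hkm
    · refine .inr (.inr ?_)
      rw [← PNat.coe_lt_coe, PNat.add_coe, PNat.add_coe]
      omega
    · have htkq : t[k] < t[q] := by
        have : (t[k] : ℕ) ≠ t[q] := fun h =>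
          hkq (ht.nodup.getElem_inj_iff.1 (PNat.coe_injective h))
        rw [← PNat.coe_lt_coe]
        omega
      have hlt := (hut.lt_iff hkt hq).1 htkq
      simp only [getElem_lexKeys, Prod.Lex.toLex_lt_toLex] at hlt
      exact hlt.imp_right .inl

theorem sameComp_map_add_of_sameOrderType (ht : IsStandard t) (hut : SameOrderType t (lexKeys u))
    (hC : ∀ a ∈ u, a ≤ C) : SameComp u (t.map (· + C)) := by
  have hlen : t.length = u.length := by simpa using hut.1
  have hchain : ∀ m ≤ u.length, SameComp (liftAbove C m u t) (liftAbove C 0 u t) := by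
    intro m
    induction m with
    | zero => exact fun _ => .refl _
    | succ m ih =>
      exact fun hm => (sameComp_liftAbove_succ ht hut hC hm).trans _ _ _ (ih (by omega))
  simpa only [liftAbove_length_eq_self ht hlen, liftAbove_zero hlen] using hchain u.length le_rfl

end Lift

theorem sameComp_stdWord (u : List ℕ+) : SameComp u (stdWord u) := by
  obtain ⟨C, hC⟩ := (u ++ stdWord u).finite_toSet.bddAbove
  have hs := isStandard_stdWord u
  have hs' := sameOrderType_stdWord (stdWord u)
  rw [stdWord_of_isStandard hs] at hs'
  have hlift := sameComp_map_add_of_sameOrderType hs (sameOrderType_stdWord u)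
    fun a ha => hC (mem_append_left _ ha)
  have hlift' := sameComp_map_add_of_sameOrderType hs hs' fun a ha => hC (mem_append_right _ ha)
  exact hlift.trans _ _ _ hlift'.symm

/-- Every connected component of `Γ(hypo)` contains exactly one standard word;
consequently two words lie in the same connected component iff they have the
same standardization. -/
theorem unique_standard_in_component :
    (∀ u : List ℕ+, ∃! s : List ℕ+, IsStandard s ∧ SameComp u s) ∧
    (∀ u v : List ℕ+, SameComp u v ↔ stdWord u = stdWord v) := by
  refine ⟨fun u => ⟨stdWord u, ⟨isStandard_stdWord u, sameComp_stdWord u⟩, ?_⟩,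
    fun u v => ?_⟩
  · rintro s ⟨hs, hus⟩
    exact (stdWord_of_isStandard hs).symm.trans hus.stdWord_eq.symm
  · exact ⟨SameComp.stdWord_eq,
      fun h => (sameComp_stdWord u).trans _ _ _ (h ▸ (sameComp_stdWord v).symm)⟩
end
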